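/- arXiv:math/0111162 — 5 statements merged into one kernel-verified Lean document; each statement's English description precedes it below -/
import Mathlib

section
/- The sequence $h_k$ defined by $h_k = 1$ for $k \le 1$, $h_2 = d/2$ (with $d \ge 3$), and $h_k = \frac{1}{2}(h_{k-1} + \cdots + h_{k-d})$ for $k \ge 3$ is (weakly) increasing in $k$. -/
/-!
For `k ≥ 2` (the recurrence also holds at `k = 2`, since `h₂ = d/2`) consecutive instances of the
recurrence telescope to `h (k+1) - h k = (h k - h (k-d)) / 2`. So once `h` is increasing up to `k`,
the step from `k` to `k+1` is nonnegative too; the induction starts from the constant part and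
`h₁ = 1 ≤ d/2 = h₂`.
-/

open Set

lemma sum_Icc_sub_succ_add_eq {M : Type*} [AddCommMonoid M] (f : ℤ → M) (k : ℤ) (d : ℕ) :
    ∑ i ∈ Finset.Icc 1 d, f (k + 1 - i) + f (k - d) = f k + ∑ i ∈ Finset.Icc 1 d, f (k - i) := by
  induction d with
  | zero => simp [add_comm]
  | succ d ih =>
    rw [Finset.sum_Icc_succ_top (by omega), Finset.sum_Icc_succ_top (by omega),
      show k + 1 - ((d + 1 : ℕ) : ℤ) = k - d by push_cast; ring, ih, add_assoc]

lemma sub_eq_mul_sub_of_rec {c : ℝ} {d : ℕ} {n₀ : ℤ} {h : ℤ → ℝ}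
    (hrec : ∀ k, n₀ ≤ k → h k = c * ∑ i ∈ Finset.Icc 1 d, h (k - i)) {k : ℤ} (hk : n₀ ≤ k) :
    h (k + 1) - h k = c * (h k - h (k - d)) := by
  rw [hrec (k + 1) (by omega)]
  linear_combination c * sum_Icc_sub_succ_add_eq h k d - hrec k hk

lemma monotoneOn_Iic_of_le_succ {α : Type*} [Preorder α] {f : ℤ → α} {n : ℤ}
    (hf : ∀ k < n, f k ≤ f (k + 1)) : MonotoneOn f (Iic n) :=
  monotoneOn_of_le_succ ordConnected_Iic fun k _ _ hk ↦ by
    rw [Order.succ_eq_add_one] at hk ⊢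
    exact hf k (by simpa [Int.add_one_le_iff] using hk)

theorem monotone_of_rec {c : ℝ} (hc : 0 ≤ c) (d : ℕ) (n₀ : ℤ) {h : ℤ → ℝ}
    (hinit : ∀ k < n₀, h k ≤ h (k + 1))
    (hrec : ∀ k, n₀ ≤ k → h k = c * ∑ i ∈ Finset.Icc 1 d, h (k - i)) : Monotone h := by
  have hsteps : ∀ n, n₀ ≤ n → ∀ k < n, h k ≤ h (k + 1) := by
    refine Int.leInduction hinit fun n hn ih k hk ↦ ?_
    rcases (Int.lt_add_one_iff.mp hk).lt_or_eq with hk | rfl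
    · exact ih k hk
    · have hmono : h (k - d) ≤ h k :=
        monotoneOn_Iic_of_le_succ ih (by simp) (le_refl k) (by omega)
      have hstep := sub_eq_mul_sub_of_rec hrec hn
      linarith [mul_nonneg hc (sub_nonneg.mpr hmono)]
  exact monotone_int_of_le_succ fun k ↦ hsteps (max (k + 1) n₀) (le_max_right _ _) k (by omega)

theorem stmt1 (d : ℕ) (hd : 3 ≤ d) (h : ℤ → ℝ)
    (h1 : ∀ k : ℤ, k ≤ 1 → h k = 1)
    (h2 : h 2 = d / 2)
    (hrec : ∀ k : ℤ, 3 ≤ k → h k = (1 / 2) * ∑ i ∈ Finset.Icc 1 d, h (k - i)) :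
    Monotone h := by
  have hrec₂ : ∀ k : ℤ, 2 ≤ k → h k = (1 / 2) * ∑ i ∈ Finset.Icc 1 d, h (k - i) := by
    intro k hk
    rcases hk.eq_or_lt with rfl | hk
    · rw [h2, Finset.sum_congr rfl fun i hi ↦ h1 _ (by simp at hi; omega)]
      simp [div_eq_inv_mul]
    · exact hrec k hk
  refine monotone_of_rec (by norm_num) d 2 (fun k hk ↦ ?_) hrec₂
  rcases (show k < 1 ∨ k = 1 by omega) with hk | rfl
  · rw [h1 k (by omega), h1 (k + 1) (by omega)]
  · have : (3 : ℝ) ≤ d := by exact_mod_cast hd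
    rw [h1 1 le_rfl, show (1 : ℤ) + 1 = 2 by norm_num, h2]
    linarith
end

section
/- Let $e_1, \dots, e_d$ be the standard basis of $\mathbb{R}^d$ and set $w_i = \lambda_i(e_1 + \cdots + e_i)$ where $\lambda_1 \ge \lambda_2 \ge \cdots \ge \lambda_d > 0$. Then the affine hyperplane $\mathcal{H}$ through $w_1, \dots, w_d$ intersects the set $Q = \lambda_d(e_1 + \cdots + e_d) - \mathbb{R}_+^d$ only in its boundary; in particular, every point of $\mathcal{H}$ has at least one coordinate $\ge \lambda_d$. -/
/-- Abel-summation style estimate: if partial sums of `A` up to `m` are ≤ 1 before `m`,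
and `M` is monotone on `[0, m]`, then `∑ A i * M i ≥ T m * M m - (M m - M 0)`. -/
lemma abel_aux (A M : ℕ → ℝ) : ∀ m : ℕ,
    (∀ i j, i ≤ j → j ≤ m → M i ≤ M j) →
    (∀ i, i < m → ∑ k ∈ Finset.range (i + 1), A k ≤ 1) →
    (∑ i ∈ Finset.range (m + 1), A i) * M m - (M m - M 0) ≤
      ∑ i ∈ Finset.range (m + 1), A i * M i := by
  intro m
  induction m with
  | zero => simp
  | succ n ih =>
    intro hM hT
    have h1 := ih (fun i j hij hjm => hM i j hij (by omega)) (fun i hi => hT i (by omega))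
    rw [Finset.sum_range_succ, Finset.sum_range_succ (f := fun i => A i * M i)]
    have hTn := hT n (by omega)
    have hMn : M n ≤ M (n + 1) := hM n (n + 1) (by omega) le_rfl
    nlinarith [mul_nonneg (by linarith : (0:ℝ) ≤ 1 - ∑ k ∈ Finset.range (n + 1), A k)
      (by linarith : (0:ℝ) ≤ M (n + 1) - M n)]

theorem stmt3 (d : ℕ) (hd : 0 < d) (l : Fin d → ℝ)
    (hmono : Antitone l) (hpos : ∀ i, 0 < l i)
    (w : Fin d → Fin d → ℝ)
    (hw : ∀ i, w i = fun j => if j ≤ i then l i else 0)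
    (Q : Set (Fin d → ℝ))
    (hQ : Q = (fun v => (fun _ => l ⟨d - 1, by omega⟩) - v) '' {v : Fin d → ℝ | ∀ j, 0 ≤ v j}) :
    ((affineSpan ℝ (Set.range w) : Set (Fin d → ℝ)) ∩ Q ⊆ frontier Q) ∧
      ∀ x ∈ affineSpan ℝ (Set.range w), ∃ i, l ⟨d - 1, by omega⟩ ≤ x i := by
  classical
  set lam : ℝ := l ⟨d - 1, by omega⟩ with hlam
  -- Part 2 first
  have part2 : ∀ x ∈ affineSpan ℝ (Set.range w), ∃ i, lam ≤ x i := by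
    intro x hx
    obtain ⟨c, hc1, hcx⟩ := eq_affineCombination_of_mem_affineSpan_of_fintype hx
    rw [Finset.affineCombination_eq_linear_combination _ _ _ hc1] at hcx
    -- reversed sequences over ℕ
    set A : ℕ → ℝ := fun n => if h : n < d then c ⟨d - 1 - n, by omega⟩ else 0 with hA
    set M : ℕ → ℝ := fun n => if h : n < d then l ⟨d - 1 - n, by omega⟩ else 0 with hM
    have hTd : ∑ k ∈ Finset.range d, A k = 1 := by
      rw [← hc1]
      refine Finset.sum_nbij' (fun k : ℕ => (⟨d - 1 - k, by omega⟩ : Fin d))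
        (fun i : Fin d => d - 1 - (i : ℕ)) ?_ ?_ ?_ ?_ ?_
      · intro a _; exact Finset.mem_univ _
      · intro a _
        have := a.isLt
        simp only [Finset.mem_range]
        omega
      · intro a ha
        have := Finset.mem_range.1 ha
        show d - 1 - ((⟨d - 1 - a, by omega⟩ : Fin d) : ℕ) = a
        simp only [Fin.val_mk]
        omega
      · intro a _
        have := a.isLt
        ext; simp; omega
      · intro a ha
        have h1 := Finset.mem_range.1 ha
        simp [A, dif_pos h1]
    have hex : ∃ n, 1 ≤ ∑ k ∈ Finset.range (n + 1), A k := by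
      refine ⟨d - 1, ?_⟩
      have : d - 1 + 1 = d := by omega
      rw [this, hTd]
    obtain ⟨m, hmd, hm1, hmlt⟩ : ∃ m, m < d ∧ (1 ≤ ∑ k ∈ Finset.range (m + 1), A k) ∧
        ∀ i, i < m → ∑ k ∈ Finset.range (i + 1), A k ≤ 1 := by
      refine ⟨Nat.find hex, ?_, Nat.find_spec hex, ?_⟩
      · have : Nat.find hex ≤ d - 1 := Nat.find_min' hex (by
          have h9 : d - 1 + 1 = d := by omega
          rw [h9, hTd])
        omega
      · intro i hi
        have := Nat.find_min hex hi
        linarith [not_le.1 this]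
    have hMmono : ∀ i j, i ≤ j → j ≤ m → M i ≤ M j := by
      intro i j hij hjm
      have hid : i < d := by omega
      have hjd : j < d := by omega
      simp only [M, dif_pos hid, dif_pos hjd]
      exact hmono (by simp [Fin.le_def]; omega)
    have key := abel_aux A M m hMmono hmlt
    have hM0 : M 0 = lam := by simp [M, hd, hlam]
    have hMm : 0 < M m := by
      simp only [M, dif_pos hmd]
      exact hpos _
    -- the index
    refine ⟨⟨d - 1 - m, by omega⟩, ?_⟩
    -- compute the coordinate of x
    have hxj : x ⟨d - 1 - m, by omega⟩ = ∑ i ∈ Finset.range (m + 1), A i * M i := by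
      have hx1 : x ⟨d - 1 - m, by omega⟩
          = ∑ i : Fin d, c i * (if (⟨d - 1 - m, by omega⟩ : Fin d) ≤ i then l i else 0) := by
        rw [hcx]
        simp only [Finset.sum_apply, Pi.smul_apply, smul_eq_mul]
        congr 1; ext i; rw [hw i]
      rw [hx1]
      have hx2 : ∑ i : Fin d, c i * (if (⟨d - 1 - m, by omega⟩ : Fin d) ≤ i then l i else 0)
          = ∑ n ∈ Finset.range d, (fun n => if h : n < d then
              c ⟨n, h⟩ * (if d - 1 - m ≤ n then l ⟨n, h⟩ else 0) else 0) n := by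
        rw [← Fin.sum_univ_eq_sum_range]
        refine Finset.sum_congr rfl fun i _ => ?_
        simp only [dif_pos i.isLt, Fin.le_def]
      rw [hx2]
      rw [← Finset.sum_subset ((fun n hn => Finset.mem_range.2 (Finset.mem_Ico.1 hn).2 : Finset.Ico (d - 1 - m) d ⊆ Finset.range d))
        (fun n hn hn' => by
          have h1 := Finset.mem_range.1 hn
          have h2 : ¬ (d - 1 - m ≤ n) := by
            intro hc
            exact hn' (Finset.mem_Ico.2 ⟨hc, h1⟩)
          simp only [dif_pos h1, if_neg h2, mul_zero])]
      refine (Finset.sum_nbij' (fun k : ℕ => d - 1 - k) (fun k : ℕ => d - 1 - k)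
        ?_ ?_ ?_ ?_ ?_).symm
      · intro a ha
        have := Finset.mem_range.1 ha
        simp only [Finset.mem_Ico]
        omega
      · intro a ha
        have := Finset.mem_Ico.1 ha
        simp only [Finset.mem_range]
        omega
      · intro a ha
        have := Finset.mem_range.1 ha
        show d - 1 - (d - 1 - a) = a
        omega
      · intro a ha
        have := Finset.mem_Ico.1 ha
        show d - 1 - (d - 1 - a) = a
        omega
      · intro a ha
        have ha' := Finset.mem_range.1 ha
        have h1 : a < d := by omega
        have h2 : d - 1 - a < d := by omega
        have h3 : d - 1 - m ≤ d - 1 - a := by omega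
        simp only [A, M, dif_pos h1, dif_pos h2, if_pos h3]
    rw [hxj]
    calc lam = 1 * M m - (M m - M 0) := by rw [hM0]; ring
    _ ≤ (∑ i ∈ Finset.range (m + 1), A i) * M m - (M m - M 0) := by nlinarith
    _ ≤ ∑ i ∈ Finset.range (m + 1), A i * M i := key
  -- description of Q
  have hQ' : Q = {x : Fin d → ℝ | ∀ j, x j ≤ lam} := by
    rw [hQ]
    ext y
    constructor
    · rintro ⟨v, hv, rfl⟩ j
      have := hv j
      simp only [Pi.sub_apply]
      linarith
    · intro hy
      refine ⟨(fun _ => lam) - y, fun j => ?_, ?_⟩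
      · simp only [Pi.sub_apply]
        linarith [hy j]
      · ext j; simp
  refine ⟨?_, part2⟩
  rintro x ⟨hxH, hxQ⟩
  obtain ⟨i, hi⟩ := part2 x hxH
  have hxle : ∀ j, x j ≤ lam := by rw [hQ'] at hxQ; exact hxQ
  have hxi : x i = lam := le_antisymm (hxle i) hi
  refine ⟨subset_closure hxQ, ?_⟩
  intro hint
  rw [mem_interior_iff_mem_nhds, Metric.mem_nhds_iff] at hint
  obtain ⟨ε, hε, hball⟩ := hint
  set y : Fin d → ℝ := Function.update x i (lam + ε / 2) with hy
  have hyb : y ∈ Metric.ball x ε := by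
    rw [Metric.mem_ball, dist_pi_lt_iff hε]
    intro b
    by_cases hb : b = i
    · subst hb
      rw [hy]
      rw [Function.update_self, hxi, Real.dist_eq]
      have h5 : lam + ε / 2 - lam = ε / 2 := by ring
      rw [h5, abs_of_pos (by linarith)]
      linarith
    · simp [y, Function.update_of_ne hb]
      exact hε
  have hyQ := hball hyb
  rw [hQ'] at hyQ
  have := hyQ i
  simp [y] at this
  linarith
end

section
/- Every rational pointed cone $C \subset \mathbb{R}^d$ can be triangulated into empty simplicial cones $C'$ with $\Delta_{C'} \subset \Delta_C$. -/
/-!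
Let `P` be the nonzero lattice points of `Δ_C` and give `w ∈ P` the height `‖w‖²`. Among the
representations `x = ∑ c_w w` (`c ≥ 0`, `w ∈ P`) of a point `x ∈ C`, take the one minimizing the
cost `∑ c_w ‖w‖²`, ties broken lexicographically in the coefficients. The supports of these
minimal representations are the cells of a regular triangulation: a minimal representation is
unique, and any nonnegative combination supported inside its support is again minimal, so two
cells meet in the cone over their common support; a linear relation on a support would be a
direction of improvement of either sign. A cell is empty because `‖·‖²` is strictly convex: a
lattice point `x ≠ 0` of `Δ_{C'}` other than a generator has `‖x‖² < ∑ e_w ‖w‖²` for its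
coefficients `e`, so `x` itself is a cheaper representation. Likewise a generator `n z` with
`n ≥ 2` is beaten by `n` copies of `z`, of cost `n ‖z‖² < n² ‖z‖²`.
-/

/-- The cone generated by a finite set `s` of integer vectors. -/
def coneFS (d : ℕ) (s : Finset (Fin d → ℤ)) : Set (Fin d → ℝ) :=
  {x | ∃ c : (Fin d → ℤ) → ℝ, (∀ w, 0 ≤ c w) ∧ x = ∑ w ∈ s, c w • fun j => (w j : ℝ)}

/-- The cone generated by a finite family of integer vectors. -/
def coneFam (d m : ℕ) (v : Fin m → Fin d → ℤ) : Set (Fin d → ℝ) :=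
  {x | ∃ c : Fin m → ℝ, (∀ i, 0 ≤ c i) ∧ x = ∑ i, c i • fun j => (v i j : ℝ)}

/-- An integer vector is primitive if no natural number `n ≠ 1` divides all its entries. -/
def Primitive (d : ℕ) (w : Fin d → ℤ) : Prop := ∀ n : ℕ, (∀ j, (n : ℤ) ∣ w j) → n = 1

open Finset

instance {κ : Type*} [LinearOrder κ] : PosSMulStrictMono ℝ (Lex (κ → ℝ)) where
  smul_lt_smul_of_pos_left t ht a b := by
    rintro ⟨i, hi, hab⟩
    exact ⟨i, fun j hj => congrArg (t * ·) (hi j hj), mul_lt_mul_of_pos_left hab ht⟩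

namespace RegularTriangulation

variable {ι V : Type*} [AddCommGroup V] [Module ℝ V] {P : Finset ι} {f : ι → V} {h : ι → ℝ}

variable (P h) in
/-- Entry `0` is the cost `∑ i ∈ P, c i * h i`; the later entries list the coefficients of `c`
in the order of `P.toList`, so that comparing lexicographically breaks ties in the cost and makes
minimal representations unique. -/
noncomputable def lexCost : (ι → ℝ) →ₗ[ℝ] Lex (ℕ → ℝ) where
  toFun c := toLex fun n => Nat.casesOn n (∑ i ∈ P, c i * h i)
    fun k => ((P.toList[k]?).map c).getD 0
  map_add' c e := by
    rw [← toLex_add]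
    congr 1
    funext n
    cases n with
    | zero => simp [add_mul, sum_add_distrib]
    | succ k => rcases hk : P.toList[k]? with _ | i <;> simp [hk]
  map_smul' t c := by
    rw [RingHom.id_apply, ← toLex_smul]
    congr 1
    funext n
    cases n with
    | zero => simp [mul_assoc, mul_sum]
    | succ k => rcases hk : P.toList[k]? with _ | i <;> simp [hk]

theorem cost_le_of_lexCost_le {c e : ι → ℝ} (hce : lexCost P h c ≤ lexCost P h e) :
    ∑ i ∈ P, c i * h i ≤ ∑ i ∈ P, e i * h i :=
  Pi.apply_le_of_toLex (i := 0) hce (by simp)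

theorem eq_zero_of_lexCost_eq_zero {c : ι → ℝ} (hc : ∀ i ∉ P, c i = 0)
    (h0 : lexCost P h c = 0) : c = 0 := by
  funext i
  by_cases hi : i ∈ P
  · obtain ⟨k, hk⟩ := List.mem_iff_getElem?.1 (mem_toList.2 hi)
    have := congrArg (fun a : Lex (ℕ → ℝ) => ofLex a (k + 1)) h0
    simp only [ofLex_zero, Pi.zero_apply] at this
    simpa [lexCost, hk] using this
  · exact hc i hi

variable (P f) in
structure IsConeRep (x : V) (c : ι → ℝ) : Prop where
  nonneg : ∀ i, 0 ≤ c i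
  eq_zero_of_notMem : ∀ i ∉ P, c i = 0
  sum_eq : ∑ i ∈ P, c i • f i = x

variable (P f h) in
structure IsLexMinRep (x : V) (c : ι → ℝ) : Prop extends IsConeRep P f x c where
  le : ∀ e, IsConeRep P f x e → lexCost P h c ≤ lexCost P h e

variable {x : V} {c δ : ι → ℝ}

theorem exists_pos_forall_nonneg_add_mul (hc : ∀ i ∈ P, 0 ≤ c i)
    (hδ : ∀ i ∈ P, δ i < 0 → c i ≠ 0) : ∃ t > 0, ∀ i ∈ P, 0 ≤ c i + t * δ i := by
  have hev : ∀ i ∈ P, ∀ᶠ t in nhdsWithin (0 : ℝ) (Set.Ioi 0), 0 ≤ c i + t * δ i := by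
    intro i hi
    rcases (hc i hi).lt_or_eq with hpos | hzero
    · have hlim : Filter.Tendsto (fun t : ℝ => c i + t * δ i) (nhds 0) (nhds (c i)) :=
        (continuous_const.add (continuous_id.mul continuous_const)).tendsto' 0 (c i) (by simp)
      exact nhdsWithin_le_nhds ((hlim.eventually (lt_mem_nhds hpos)).mono fun _ => le_of_lt)
    · have hδi : 0 ≤ δ i := not_lt.1 fun hneg => hδ i hi hneg hzero.symm
      filter_upwards [self_mem_nhdsWithin] with t ht
      rw [← hzero]
      exact add_nonneg le_rfl (mul_nonneg (le_of_lt ht) hδi)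
  obtain ⟨t, htP, ht⟩ := (((Filter.eventually_all_finset P).2 hev).and self_mem_nhdsWithin).exists
  exact ⟨t, ht, htP⟩

theorem IsConeRep.add_smul (hc : IsConeRep P f x c) (hδP : ∀ i ∉ P, δ i = 0)
    (hδf : ∑ i ∈ P, δ i • f i = 0) {t : ℝ} (ht : ∀ i ∈ P, 0 ≤ c i + t * δ i) :
    IsConeRep P f x (c + t • δ) where
  nonneg i := by
    by_cases hi : i ∈ P
    · exact ht i hi
    · simp [hc.eq_zero_of_notMem i hi, hδP i hi]
  eq_zero_of_notMem i hi := by simp [hc.eq_zero_of_notMem i hi, hδP i hi]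
  sum_eq := by
    simp only [Pi.add_apply, Pi.smul_apply, smul_eq_mul, _root_.add_smul, mul_smul,
      sum_add_distrib, ← smul_sum, hc.sum_eq, hδf, smul_zero, add_zero]

theorem exists_relation_lexCost_nonpos (hli : ¬LinearIndepOn ℝ f ↑(P.filter (c · ≠ 0))) :
    ∃ δ : ι → ℝ, (∀ i, δ i ≠ 0 → c i ≠ 0) ∧ ∑ i ∈ P, δ i • f i = 0 ∧ (∃ i, δ i ≠ 0) ∧
      lexCost P h δ ≤ 0 := by
  obtain ⟨g, hg, i, hi, hgi⟩ := not_linearIndepOn_finset_iff.1 hli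
  set δ : ι → ℝ := fun j => if c j ≠ 0 then g j else 0
  have hδc : ∀ j, δ j ≠ 0 → c j ≠ 0 := fun j hj => by_contra fun hcj => hj (if_neg hcj)
  have hδf : ∑ j ∈ P, δ j • f j = 0 := by
    rw [← hg, sum_filter]
    exact sum_congr rfl fun j _ => by by_cases hcj : c j = 0 <;> simp [δ, hcj]
  have hδi : δ i ≠ 0 := by simpa [δ, (mem_filter.1 hi).2] using hgi
  rcases le_total (lexCost P h δ) 0 with hle | hge
  · exact ⟨δ, hδc, hδf, ⟨i, hδi⟩, hle⟩
  · exact ⟨-δ, fun j hj => hδc j (by simpa using hj), by simpa using hδf,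
      ⟨i, by simpa using hδi⟩, by simpa using hge⟩

theorem IsLexMinRep.lexCost_nonneg (hc : IsLexMinRep P f h x c) (hδP : ∀ i ∉ P, δ i = 0)
    (hδf : ∑ i ∈ P, δ i • f i = 0) (hδc : ∀ i ∈ P, δ i < 0 → c i ≠ 0) :
    0 ≤ lexCost P h δ := by
  obtain ⟨t, ht, htc⟩ := exists_pos_forall_nonneg_add_mul (fun i _ => hc.nonneg i) hδc
  have hle := hc.le _ (hc.add_smul hδP hδf htc)
  rw [map_add, map_smul, le_add_iff_nonneg_right] at hle
  exact le_of_smul_le_smul_left (by rwa [smul_zero]) ht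

theorem IsLexMinRep.linearIndepOn (hc : IsLexMinRep P f h x c) :
    LinearIndepOn ℝ f ↑(P.filter (c · ≠ 0)) := by
  by_contra hli
  -- A relation among the support is a direction in which `c` can move with either sign.
  obtain ⟨δ, hδc, hδf, ⟨i, hi⟩, hδle⟩ := exists_relation_lexCost_nonpos (h := h) hli
  have hδP : ∀ j ∉ P, δ j = 0 := fun j hj => by_contra fun hδj =>
    hδc j hδj (hc.eq_zero_of_notMem j hj)
  have hδ0 := eq_zero_of_lexCost_eq_zero hδP
    (le_antisymm hδle (hc.lexCost_nonneg hδP hδf fun j _ hj => hδc j hj.ne))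
  exact hi (congrFun hδ0 i)

theorem IsLexMinRep.of_support_subset (hc : IsLexMinRep P f h x c) {e : ι → ℝ}
    (he : ∀ i, 0 ≤ e i) (hec : ∀ i, e i ≠ 0 → c i ≠ 0) :
    IsLexMinRep P f h (∑ i ∈ P, e i • f i) e := by
  have heP : ∀ i ∉ P, e i = 0 := fun i hi => by_contra fun hne =>
    hec i hne (hc.eq_zero_of_notMem i hi)
  refine ⟨⟨he, heP, rfl⟩, fun e' he' => ?_⟩
  have hδ := hc.lexCost_nonneg (δ := e' - e)
    (fun i hi => by simp [heP i hi, he'.eq_zero_of_notMem i hi])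
    (by simp [sub_smul, sum_sub_distrib, he'.sum_eq])
    (fun i _ hi => hec i (by have := he'.nonneg i; simp at hi; linarith))
  rwa [map_sub, sub_nonneg] at hδ

theorem IsLexMinRep.unique {e : ι → ℝ} (hc : IsLexMinRep P f h x c)
    (he : IsLexMinRep P f h x e) : c = e :=
  sub_eq_zero.1 <| eq_zero_of_lexCost_eq_zero
    (fun i hi => by simp [hc.eq_zero_of_notMem i hi, he.eq_zero_of_notMem i hi])
    (by rw [map_sub, sub_eq_zero]
        exact le_antisymm (hc.le e he.toIsConeRep) (he.le c hc.toIsConeRep))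

theorem IsConeRep.eq_of_filter_eq {e : ι → ℝ} (hc : IsConeRep P f x c) (he : IsConeRep P f x e)
    (hce : P.filter (c · ≠ 0) = P.filter (e · ≠ 0))
    (hli : LinearIndepOn ℝ f ↑(P.filter (c · ≠ 0))) : c = e := by
  have hsub := linearIndepOn_finset_iff.1 hli (c - e) <| by
    rw [sum_subset (filter_subset _ P) fun i hiP his => ?_]
    · simp [sub_smul, sum_sub_distrib, hc.sum_eq, he.sum_eq]
    · have hci : c i = 0 := by simpa [hiP] using his
      have hei : e i = 0 := by rw [hce] at his; simpa [hiP] using his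
      simp [hci, hei]
  funext i
  by_cases hiP : i ∈ P
  · by_cases hci : c i = 0
    · have hei : e i = 0 := by
        have his : i ∉ P.filter (c · ≠ 0) := by simp [hci]
        rw [hce] at his
        simpa [hiP] using his
      rw [hci, hei]
    · exact sub_eq_zero.1 (hsub i (by simp [hiP, hci]))
  · rw [hc.eq_zero_of_notMem i hiP, he.eq_zero_of_notMem i hiP]

theorem IsConeRep.exists_filter_ssubset (hc : IsConeRep P f x c) (hδc : ∀ i, δ i ≠ 0 → c i ≠ 0)
    (hδf : ∑ i ∈ P, δ i • f i = 0) {i₀ : ι} (hi₀ : δ i₀ < 0) :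
    ∃ t : ℝ, 0 ≤ t ∧ IsConeRep P f x (c + t • δ) ∧
      P.filter ((c + t • δ) · ≠ 0) ⊂ P.filter (c · ≠ 0) := by
  have hδP : ∀ i ∉ P, δ i = 0 := fun i hi => by_contra fun hne =>
    hδc i hne (hc.eq_zero_of_notMem i hi)
  have hi₀P : i₀ ∈ P := by_contra fun hi => hi₀.ne (hδP i₀ hi)
  obtain ⟨j, hj, hjmin⟩ := (P.filter (δ · < 0)).exists_min_image (fun i => c i / -δ i)
    ⟨i₀, mem_filter.2 ⟨hi₀P, hi₀⟩⟩
  obtain ⟨hjP, hδj⟩ := mem_filter.1 hj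
  set t := c j / -δ j
  have hnonneg : ∀ i ∈ P, 0 ≤ c i + t * δ i := by
    intro i hi
    rcases lt_or_ge (δ i) 0 with hδi | hδi
    · have := (le_div_iff₀ (neg_pos.2 hδi)).1 (hjmin i (mem_filter.2 ⟨hi, hδi⟩))
      linarith
    · exact add_nonneg (hc.nonneg i) (mul_nonneg (div_nonneg (hc.nonneg j)
        (neg_nonneg.2 hδj.le)) hδi)
  refine ⟨t, div_nonneg (hc.nonneg j) (neg_nonneg.2 hδj.le), hc.add_smul hδP hδf hnonneg, ?_⟩
  refine ssubset_iff_of_subset (fun i hi => ?_) |>.2 ⟨j, ?_, ?_⟩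
  · obtain ⟨hiP, hne⟩ := mem_filter.1 hi
    refine mem_filter.2 ⟨hiP, fun hci => hne ?_⟩
    have hδi : δ i = 0 := by_contra fun h' => hδc i h' hci
    simp [hci, hδi]
  · exact mem_filter.2 ⟨hjP, hδc j hδj.ne⟩
  · simp only [mem_filter, not_and, not_not]
    intro _
    simp only [Pi.add_apply, Pi.smul_apply, smul_eq_mul, t]
    field_simp [hδj.ne]
    ring

theorem exists_neg_of_lexCost_nonpos (hh : ∀ i ∈ P, 0 < h i) (hδP : ∀ i ∉ P, δ i = 0)
    (hδ : ∃ i, δ i ≠ 0) (hle : lexCost P h δ ≤ 0) : ∃ i, δ i < 0 := by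
  obtain ⟨i, hi⟩ := hδ
  by_contra! hδ
  have hiP : i ∈ P := by_contra fun hiP => hi (hδP i hiP)
  have hpos : 0 < ∑ j ∈ P, δ j * h j := sum_pos' (fun j hj => mul_nonneg (hδ j) (hh j hj).le)
    ⟨i, hiP, mul_pos ((hδ i).lt_of_ne' hi) (hh i hiP)⟩
  have := cost_le_of_lexCost_le (c := δ) (e := 0) (by rwa [map_zero])
  simp only [Pi.zero_apply, zero_mul, sum_const_zero] at this
  linarith

theorem IsConeRep.exists_linearIndepOn_lexCost_le (hh : ∀ i ∈ P, 0 < h i)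
    (hc : IsConeRep P f x c) :
    ∃ e, IsConeRep P f x e ∧ LinearIndepOn ℝ f ↑(P.filter (e · ≠ 0)) ∧
      lexCost P h e ≤ lexCost P h c := by
  induction hn : #(P.filter (c · ≠ 0)) using Nat.strong_induction_on generalizing c with
  | _ n ih =>
  by_cases hli : LinearIndepOn ℝ f ↑(P.filter (c · ≠ 0))
  · exact ⟨c, hc, hli, le_rfl⟩
  obtain ⟨δ, hδc, hδf, hδ, hδle⟩ := exists_relation_lexCost_nonpos (h := h) hli
  obtain ⟨i₀, hi₀⟩ := exists_neg_of_lexCost_nonpos hh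
    (fun i hi => by_contra fun hδi => hδc i hδi (hc.eq_zero_of_notMem i hi)) hδ hδle
  obtain ⟨t, ht, hrep, hssub⟩ := hc.exists_filter_ssubset hδc hδf hi₀
  obtain ⟨e, he, hli, hle⟩ := ih _ (hn ▸ card_lt_card hssub) hrep rfl
  refine ⟨e, he, hli, hle.trans ?_⟩
  rw [map_add, map_smul]
  exact add_le_of_nonpos_right (smul_nonpos_of_nonneg_of_nonpos ht hδle)

theorem IsConeRep.exists_isLexMinRep (hh : ∀ i ∈ P, 0 < h i) (hc : IsConeRep P f x c) :
    ∃ c, IsLexMinRep P f h x c := by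
  -- Every representation is dominated by one with linearly independent support, and there are
  -- only finitely many of those.
  set B := {e | IsConeRep P f x e ∧ LinearIndepOn ℝ f ↑(P.filter (e · ≠ 0))}
  have hB : B.Finite := by
    refine Set.Finite.of_finite_image (f := fun e => P.filter (e · ≠ 0))
      (P.powerset.finite_toSet.subset ?_) fun e he e' he' hee' =>
        he.1.eq_of_filter_eq he'.1 hee' he.2
    rintro _ ⟨e, -, rfl⟩
    exact mem_powerset.2 (filter_subset _ P)
  obtain ⟨e₀, he₀, hli₀, -⟩ := hc.exists_linearIndepOn_lexCost_le hh
  obtain ⟨c, hcB, hmin⟩ := Set.exists_min_image B (lexCost P h) hB ⟨e₀, he₀, hli₀⟩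
  refine ⟨c, hcB.1, fun e he => ?_⟩
  obtain ⟨e', he', hli, hle⟩ := he.exists_linearIndepOn_lexCost_le hh
  exact (hmin e' ⟨he', hli⟩).trans hle

variable (f) in
def finsetCone (s : Finset ι) : Set V :=
  {x | ∃ c : ι → ℝ, (∀ i, 0 ≤ c i) ∧ x = ∑ i ∈ s, c i • f i}

variable {s t : Finset ι}

theorem IsConeRep.mem_finsetCone (hc : IsConeRep P f x c) (hsP : s ⊆ P)
    (hcs : ∀ i, c i ≠ 0 → i ∈ s) : x ∈ finsetCone f s :=
  ⟨c, hc.nonneg, by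
    rw [← hc.sum_eq]
    exact (sum_subset hsP fun i _ his => by rw [not_imp_comm.1 (hcs i) his, zero_smul]).symm⟩

theorem exists_isConeRep_of_mem_finsetCone (hsP : s ⊆ P) (hx : x ∈ finsetCone f s) :
    ∃ c, IsConeRep P f x c ∧ ∀ i, c i ≠ 0 → i ∈ s := by
  classical
  obtain ⟨a, ha, rfl⟩ := hx
  refine ⟨fun i => if i ∈ s then a i else 0, ⟨fun i => ?_, fun i hi => ?_, ?_⟩, fun i hi => ?_⟩
  · split_ifs
    exacts [ha i, le_rfl]
  · exact if_neg fun his => hi (hsP his)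
  · rw [← sum_subset hsP fun i _ his => by simp [his]]
    exact sum_congr rfl fun i hi => by simp [hi]
  · exact by_contra fun his => hi (if_neg his)

theorem finsetCone_mono (hst : s ⊆ t) : finsetCone f s ⊆ finsetCone f t := fun _ hx =>
  have ⟨_, hc, hcs⟩ := exists_isConeRep_of_mem_finsetCone hst hx
  hc.mem_finsetCone subset_rfl fun i hi => hst (hcs i hi)

theorem IsLexMinRep.exists_of_mem_finsetCone {y : V} (hc : IsLexMinRep P f h y c)
    (hx : x ∈ finsetCone f (P.filter (c · ≠ 0))) :
    ∃ e, IsLexMinRep P f h x e ∧ ∀ i, e i ≠ 0 → i ∈ P.filter (c · ≠ 0) := by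
  obtain ⟨e, he, hes⟩ := exists_isConeRep_of_mem_finsetCone (filter_subset _ P) hx
  exact ⟨e, he.sum_eq ▸ hc.of_support_subset he.nonneg fun i hi => (mem_filter.1 (hes i hi)).2,
    hes⟩

variable (P f h) in
open Classical in
noncomputable def cells : Finset (Finset ι) :=
  P.powerset.filter fun s => ∃ x c, IsLexMinRep P f h x c ∧ P.filter (c · ≠ 0) = s

theorem mem_cells : s ∈ cells P f h ↔ ∃ x c, IsLexMinRep P f h x c ∧ P.filter (c · ≠ 0) = s := by
  simp only [cells, mem_filter, mem_powerset, and_iff_right_iff_imp]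
  rintro ⟨x, c, -, rfl⟩
  exact filter_subset _ P

theorem subset_of_mem_cells (hs : s ∈ cells P f h) : s ⊆ P := by
  obtain ⟨x, c, -, rfl⟩ := mem_cells.1 hs
  exact filter_subset _ P

theorem linearIndepOn_of_mem_cells (hs : s ∈ cells P f h) : LinearIndepOn ℝ f ↑s := by
  obtain ⟨x, c, hc, rfl⟩ := mem_cells.1 hs
  exact hc.linearIndepOn

theorem iUnion_cells (hh : ∀ i ∈ P, 0 < h i) :
    ⋃ s ∈ cells P f h, finsetCone f s = finsetCone f P := by
  refine subset_antisymm (Set.iUnion₂_subset fun s hs => finsetCone_mono (subset_of_mem_cells hs))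
    fun x hx => ?_
  obtain ⟨c₀, hc₀, -⟩ := exists_isConeRep_of_mem_finsetCone subset_rfl hx
  obtain ⟨c, hc⟩ := hc₀.exists_isLexMinRep hh
  refine Set.mem_biUnion (mem_cells.2 ⟨x, c, hc, rfl⟩)
    (hc.mem_finsetCone (filter_subset _ P) fun i hi => mem_filter.2 ⟨?_, hi⟩)
  exact by_contra fun hiP => hi (hc.eq_zero_of_notMem i hiP)

theorem finsetCone_inter_of_mem_cells [DecidableEq ι] (hs : s ∈ cells P f h)
    (ht : t ∈ cells P f h) : finsetCone f s ∩ finsetCone f t = finsetCone f (s ∩ t) := by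
  refine subset_antisymm (fun x ⟨hxs, hxt⟩ => ?_)
    (Set.subset_inter (finsetCone_mono inter_subset_left) (finsetCone_mono inter_subset_right))
  obtain ⟨y, c, hc, rfl⟩ := mem_cells.1 hs
  obtain ⟨z, c', hc', rfl⟩ := mem_cells.1 ht
  obtain ⟨e, he, hes⟩ := hc.exists_of_mem_finsetCone hxs
  obtain ⟨e', he', het⟩ := hc'.exists_of_mem_finsetCone hxt
  rw [← he.unique he'] at het
  exact he.mem_finsetCone (inter_subset_left.trans (filter_subset _ P))
    fun i hi => mem_inter.2 ⟨hes i hi, het i hi⟩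

theorem sum_mul_le_of_mem_cells (hs : s ∈ cells P f h) {e : ι → ℝ} (he : ∀ i, 0 ≤ e i)
    (hes : ∀ i ∉ s, e i = 0) {k : ι} (hk : k ∈ P) (hek : ∑ i ∈ s, e i • f i = f k) :
    ∑ i ∈ s, e i * h i ≤ h k := by
  classical
  have hsP := subset_of_mem_cells hs
  obtain ⟨x, c, hc, rfl⟩ := mem_cells.1 hs
  have hmin := hc.of_support_subset he fun i hi =>
    (mem_filter.1 (by_contra fun his => hi (hes i his))).2
  rw [← sum_subset hsP fun i _ his => by rw [hes i his, zero_smul], hek] at hmin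
  have hδk : IsConeRep P f (f k) (Pi.single k 1) :=
    ⟨fun i => by by_cases hik : i = k <;> simp [hik],
      fun i hi => by simp [(ne_of_mem_of_not_mem hk hi).symm],
      by simp [Pi.single_apply, hk]⟩
  have hcost := cost_le_of_lexCost_le (hmin.le _ hδk)
  rw [← sum_subset hsP fun i _ his => by rw [hes i his, zero_mul]] at hcost
  simpa [Pi.single_apply, hk] using hcost

theorem le_mul_of_mem_cells (hs : s ∈ cells P f h) {i j : ι} (hi : i ∈ s) (hj : j ∈ P) {a : ℝ}
    (ha : 0 ≤ a) (hf : f i = a • f j) : h i ≤ a * h j := by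
  classical
  obtain ⟨x, c, hc, rfl⟩ := mem_cells.1 hs
  obtain ⟨hiP, hci⟩ := mem_filter.1 hi
  set δ : ι → ℝ := Pi.single j a - Pi.single i 1
  have hδ := hc.lexCost_nonneg (δ := δ) (fun k hk => ?_) ?_ ?_
  · have := cost_le_of_lexCost_le (c := 0) (e := δ) (by rwa [map_zero])
    simp [δ, sub_mul, sum_sub_distrib, Pi.single_apply, hiP, hj] at this
    linarith
  · simp [δ, (ne_of_mem_of_not_mem hj hk).symm, (ne_of_mem_of_not_mem hiP hk).symm]
  · simp [δ, sub_smul, sum_sub_distrib, Pi.single_apply, hiP, hj, hf]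
  · intro k _ hk
    by_cases hki : k = i
    · exact hki ▸ hci
    · have : 0 ≤ (Pi.single j a : ι → ℝ) k := by by_cases hkj : k = j <;> simp [hkj, ha]
      simp [δ, hki] at hk
      linarith

theorem coe_hull_image_eq_finsetCone (s : Finset ι) :
    (PointedCone.hull ℝ (f '' ↑s) : Set V) = finsetCone f s := by
  ext x
  rw [SetLike.mem_coe, Submodule.mem_span_image_finset_iff_exists_fun']
  constructor
  · rintro ⟨c, rfl⟩
    exact ⟨fun i => c i, fun i => (c i).2, rfl⟩
  · rintro ⟨c, hc, rfl⟩
    exact ⟨fun i => ⟨c i, hc i⟩, rfl⟩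

end RegularTriangulation

theorem exists_sum_le_one_of_mem_convexHull_insert_zero {ι V : Type*} [AddCommGroup V] [Module ℝ V]
    {f : ι → V} {s : Finset ι} {y : V}
    (hy : y ∈ convexHull ℝ (insert 0 (f '' ↑s))) :
    ∃ e : ι → ℝ, (∀ i, 0 ≤ e i) ∧ (∀ i ∉ s, e i = 0) ∧ ∑ i ∈ s, e i ≤ 1 ∧
      ∑ i ∈ s, e i • f i = y := by
  classical
  refine convexHull_min (t := {y | ∃ e : ι → ℝ, (∀ i, 0 ≤ e i) ∧ (∀ i ∉ s, e i = 0) ∧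
    ∑ i ∈ s, e i ≤ 1 ∧ ∑ i ∈ s, e i • f i = y}) ?_ ?_ hy
  · rintro _ (rfl | ⟨i, hi : i ∈ s, rfl⟩)
    · exact ⟨0, fun _ => le_rfl, fun _ _ => rfl, by simp, by simp⟩
    · refine ⟨Pi.single i 1, fun j => ?_, fun j hj => ?_, by simp [hi],
        by simp [Pi.single_apply, ite_smul, hi]⟩
      · by_cases hji : j = i <;> simp [hji]
      · simp [(ne_of_mem_of_not_mem hi hj).symm]
  · rintro _ ⟨e₁, he₁, he₁s, hsum₁, rfl⟩ _ ⟨e₂, he₂, he₂s, hsum₂, rfl⟩ a b ha hb hab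
    refine ⟨a • e₁ + b • e₂, fun i => ?_, fun i hi => by simp [he₁s i hi, he₂s i hi], ?_, ?_⟩
    · simpa using add_nonneg (mul_nonneg ha (he₁ i)) (mul_nonneg hb (he₂ i))
    · simp only [Pi.add_apply, Pi.smul_apply, smul_eq_mul, sum_add_distrib, ← mul_sum]
      nlinarith
    · simp [_root_.add_smul, mul_smul, sum_add_distrib, ← smul_sum]

theorem sq_norm_lt_sum_mul_sq_norm {ι E : Type*} [NormedAddCommGroup E] [InnerProductSpace ℝ E]
    {s : Finset ι} {e : ι → ℝ} {g : ι → E} {x : E} (he : ∀ i ∈ s, 0 ≤ e i)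
    (hsum : ∑ i ∈ s, e i ≤ 1) (hx : ∑ i ∈ s, e i • g i = x) (hx0 : x ≠ 0)
    (hgx : ∀ i ∈ s, g i ≠ x) : ‖x‖ ^ 2 < ∑ i ∈ s, e i * ‖g i‖ ^ 2 := by
  have hinner : ∑ i ∈ s, e i * inner ℝ (g i) x = ‖x‖ ^ 2 := by
    rw [← real_inner_self_eq_norm_sq]
    conv_rhs => arg 2; rw [← hx]
    simp [sum_inner, real_inner_smul_left]
  have hid : ∑ i ∈ s, e i * ‖g i - x‖ ^ 2 =
      ∑ i ∈ s, e i * ‖g i‖ ^ 2 - 2 * ∑ i ∈ s, e i * inner ℝ (g i) x +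
        (∑ i ∈ s, e i) * ‖x‖ ^ 2 := by
    rw [mul_sum, sum_mul, ← sum_sub_distrib, ← sum_add_distrib]
    exact sum_congr rfl fun i _ => by rw [norm_sub_sq_real]; ring
  rw [hinner] at hid
  have hx2 : 0 < ‖x‖ ^ 2 := by positivity
  rcases hsum.lt_or_eq with hlt | heq
  · nlinarith [sum_nonneg fun i hi => mul_nonneg (he i hi) (sq_nonneg ‖g i - x‖)]
  · obtain ⟨i, hi, hei⟩ : ∃ i ∈ s, 0 < e i := by
      by_contra! hle
      have := sum_nonpos hle
      linarith
    have hpos : 0 < ∑ i ∈ s, e i * ‖g i - x‖ ^ 2 :=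
      sum_pos' (fun j hj => mul_nonneg (he j hj) (sq_nonneg _))
        ⟨i, hi, mul_pos hei (by have := sub_ne_zero.2 (hgx i hi); positivity)⟩
    nlinarith

open RegularTriangulation

section IntegerVectors

variable {d : ℕ}

def castVec (w : Fin d → ℤ) : Fin d → ℝ := fun j => w j

theorem castVec_injective : Function.Injective (castVec (d := d)) :=
  fun _ _ h => funext fun j => by simpa [castVec] using congrFun h j

@[simp] theorem castVec_zero : castVec (0 : Fin d → ℤ) = 0 :=
  funext fun _ => Int.cast_zero

@[simp] theorem castVec_eq_zero {w : Fin d → ℤ} : castVec w = 0 ↔ w = 0 :=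
  castVec_injective.eq_iff' castVec_zero

theorem castVec_nsmul (n : ℕ) (z : Fin d → ℤ) : castVec (n • z) = (n : ℝ) • castVec z :=
  funext fun j => by simp [castVec]

noncomputable def sqNorm (w : Fin d → ℤ) : ℝ := ‖WithLp.toLp 2 (castVec w)‖ ^ 2

theorem sqNorm_pos {w : Fin d → ℤ} (hw : w ≠ 0) : 0 < sqNorm w := by
  have : WithLp.toLp 2 (castVec w) ≠ 0 := by simpa using hw
  unfold sqNorm
  positivity

theorem exists_finset_nonzero_latticePoints {S : Set (Fin d → ℝ)} (hS : Bornology.IsBounded S) :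
    ∃ P : Finset (Fin d → ℤ), ∀ z, z ∈ P ↔ castVec z ∈ S ∧ z ≠ 0 := by
  obtain ⟨R, hR⟩ := hS.exists_norm_le
  have hfin : {z : Fin d → ℤ | castVec z ∈ S ∧ z ≠ 0}.Finite := by
    refine (Set.finite_Icc (fun _ => -⌈R⌉) fun _ => ⌈R⌉).subset fun z hz => ?_
    have hzR : ∀ j, |(z j : ℝ)| ≤ ⌈R⌉ := fun j =>
      ((norm_le_pi_norm (castVec z) j).trans (hR _ hz.1)).trans (Int.le_ceil R)
    exact ⟨fun j => by have := (abs_le.1 (hzR j)).1; exact_mod_cast this,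
      fun j => by have := (abs_le.1 (hzR j)).2; exact_mod_cast this⟩
  exact ⟨hfin.toFinset, fun z => hfin.mem_toFinset⟩

variable {S : Set (Fin d → ℝ)} {P : Finset (Fin d → ℤ)}

theorem convexHull_insert_zero_subset (hSc : Convex ℝ S) (hS0 : 0 ∈ S)
    (hP : ∀ z, z ∈ P ↔ castVec z ∈ S ∧ z ≠ 0) {s : Finset (Fin d → ℤ)} (hsP : s ⊆ P) :
    convexHull ℝ (insert 0 (castVec '' ↑s)) ⊆ S :=
  convexHull_min (Set.insert_subset hS0 (by rintro _ ⟨w, hw, rfl⟩; exact ((hP w).1 (hsP hw)).1))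
    hSc

theorem primitive_of_mem_cells (hSc : Convex ℝ S) (hS0 : 0 ∈ S)
    (hP : ∀ z, z ∈ P ↔ castVec z ∈ S ∧ z ≠ 0) {s : Finset (Fin d → ℤ)}
    (hs : s ∈ cells P castVec sqNorm) {w : Fin d → ℤ} (hw : w ∈ s) : Primitive d w := by
  obtain ⟨hwS, hw0⟩ := (hP w).1 (subset_of_mem_cells hs hw)
  intro n hn
  by_contra hn1
  have hn0 : n ≠ 0 := by
    rintro rfl
    exact hw0 (funext fun j => by simpa using hn j)
  set z : Fin d → ℤ := fun j => w j / n
  have hwz : w = n • z := funext fun j => by simp [z, Int.mul_ediv_cancel' (hn j)]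
  have hcast : castVec w = (n : ℝ) • castVec z := by rw [hwz, castVec_nsmul]
  have hn2 : (2 : ℝ) ≤ n := by exact_mod_cast (by omega : 2 ≤ n)
  have hz0 : z ≠ 0 := by
    rintro hz
    exact hw0 (by rw [hwz, hz, smul_zero])
  have hzS : castVec z = (n : ℝ)⁻¹ • castVec w := by
    rw [hcast, smul_smul, inv_mul_cancel₀ (by positivity), one_smul]
  have hzP : z ∈ P := (hP z).2 ⟨hzS ▸ hSc.smul_mem_of_zero_mem hS0 hwS
    ⟨by positivity, inv_le_one_of_one_le₀ (by linarith)⟩, hz0⟩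
  have hle := le_mul_of_mem_cells hs hw hzP (Nat.cast_nonneg n) hcast
  have hsq : sqNorm w = (n : ℝ) ^ 2 * sqNorm z := by
    simp [sqNorm, hcast, norm_smul, mul_pow]
  rw [hsq] at hle
  nlinarith [le_of_mul_le_mul_right hle (sqNorm_pos hz0)]

theorem eq_zero_or_mem_of_mem_cells (hSc : Convex ℝ S) (hS0 : 0 ∈ S)
    (hP : ∀ z, z ∈ P ↔ castVec z ∈ S ∧ z ≠ 0) {s : Finset (Fin d → ℤ)}
    (hs : s ∈ cells P castVec sqNorm) {x : Fin d → ℤ}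
    (hx : castVec x ∈ convexHull ℝ (insert 0 (castVec '' ↑s))) : x = 0 ∨ x ∈ s := by
  by_contra! hxs
  obtain ⟨e, he, hes, hsum, hex⟩ := exists_sum_le_one_of_mem_convexHull_insert_zero hx
  have hxP : x ∈ P :=
    (hP x).2 ⟨convexHull_insert_zero_subset hSc hS0 hP (subset_of_mem_cells hs) hx, hxs.1⟩
  have hle := sum_mul_le_of_mem_cells hs he hes hxP hex
  have hlt := sq_norm_lt_sum_mul_sq_norm (g := fun w => WithLp.toLp 2 (castVec w))
    (x := WithLp.toLp 2 (castVec x))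
    (fun i _ => he i) hsum (by simp [← WithLp.toLp_smul, ← WithLp.toLp_sum, hex])
    (by simpa using hxs.1) fun i hi => by
      simpa using castVec_injective.ne (ne_of_mem_of_not_mem hi hxs.2)
  exact not_le.2 hlt hle

theorem finsetCone_eq_coneFam {m : ℕ} {v : Fin m → Fin d → ℤ}
    (hP : ∀ z, z ∈ P ↔
      castVec z ∈ convexHull ℝ (insert 0 (Set.range fun i => castVec (v i))) ∧ z ≠ 0) :
    finsetCone castVec P = coneFam d m v := by
  change _ = finsetCone (fun i => castVec (v i)) univ
  rw [← coe_hull_image_eq_finsetCone, ← coe_hull_image_eq_finsetCone, coe_univ, Set.image_univ]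
  congr 1
  refine le_antisymm (Submodule.span_le.2 ?_) (Submodule.span_le.2 ?_)
  · rintro _ ⟨w, hw, rfl⟩
    exact convexHull_min (Set.insert_subset (zero_mem _) PointedCone.subset_hull)
      (PointedCone.convex _) ((hP w).1 hw).1
  · rintro _ ⟨i, rfl⟩
    by_cases hvi : v i = 0
    · simp [hvi]
    · exact PointedCone.subset_hull ⟨v i, (hP _).2 ⟨subset_convexHull ℝ _
        (Set.mem_insert_of_mem _ ⟨i, rfl⟩), hvi⟩, rfl⟩

end IntegerVectors

theorem stmt13_general (d m : ℕ) (v : Fin m → Fin d → ℤ) :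
    ∃ F : Finset (Finset (Fin d → ℤ)),
      (∀ s ∈ F,
        LinearIndependent ℝ (fun w : s => fun j => ((w : Fin d → ℤ) j : ℝ)) ∧
        (∀ w ∈ s, Primitive d w) ∧
        -- the simplicial cone on `s` is empty: the only lattice points of `Δ_{C'}`
        -- are `0` and the generators
        (∀ x : Fin d → ℤ,
          (fun j => (x j : ℝ)) ∈
            convexHull ℝ (insert 0 ((fun w : Fin d → ℤ => fun j => (w j : ℝ)) ''
              (s : Set (Fin d → ℤ)))) → x = 0 ∨ x ∈ s) ∧
        convexHull ℝ (insert 0 ((fun w : Fin d → ℤ => fun j => (w j : ℝ)) ''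
            (s : Set (Fin d → ℤ)))) ⊆
          convexHull ℝ (insert 0 (Set.range fun i => fun j => (v i j : ℝ)))) ∧
      (⋃ s ∈ F, coneFS d s) = coneFam d m v ∧
      -- the cones intersect pairwise in common faces
      ∀ s ∈ F, ∀ t ∈ F, coneFS d s ∩ coneFS d t = coneFS d (s ∩ t) := by
  set Δ := convexHull ℝ (insert 0 (Set.range fun i => castVec (v i)))
  have hΔc : Convex ℝ Δ := convex_convexHull ℝ _
  have hΔ0 : (0 : Fin d → ℝ) ∈ Δ := subset_convexHull ℝ _ (Set.mem_insert _ _)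
  obtain ⟨P, hP⟩ := exists_finset_nonzero_latticePoints
    (((Set.finite_range fun i => castVec (v i)).insert 0).isCompact_convexHull ℝ).isBounded
  refine ⟨cells P castVec sqNorm, fun s hs => ⟨linearIndepOn_of_mem_cells hs,
    fun w hw => primitive_of_mem_cells hΔc hΔ0 hP hs hw,
    fun x hx => eq_zero_or_mem_of_mem_cells hΔc hΔ0 hP hs hx,
    convexHull_insert_zero_subset hΔc hΔ0 hP (subset_of_mem_cells hs)⟩, ?_,
    fun s hs t ht => finsetCone_inter_of_mem_cells hs ht⟩
  rw [← finsetCone_eq_coneFam hP]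
  exact iUnion_cells fun w hw => sqNorm_pos ((hP w).1 hw).2

theorem stmt13 (d m : ℕ) (v : Fin m → Fin d → ℤ)
    (hprim : ∀ i, Primitive d (v i))
    -- each `v i` lies on an extreme ray: it is not in the cone of the other generators
    (hextreme : ∀ i, (fun j => (v i j : ℝ)) ∉
      coneFam d m (fun k => if k = i then 0 else v k))
    -- the cone is pointed
    (hpointed : coneFam d m v ∩ (-(coneFam d m v)) = {0}) :
    ∃ F : Finset (Finset (Fin d → ℤ)),
      (∀ s ∈ F,
        LinearIndependent ℝ (fun w : s => fun j => ((w : Fin d → ℤ) j : ℝ)) ∧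
        (∀ w ∈ s, Primitive d w) ∧
        -- the simplicial cone on `s` is empty: the only lattice points of `Δ_{C'}`
        -- are `0` and the generators
        (∀ x : Fin d → ℤ,
          (fun j => (x j : ℝ)) ∈
            convexHull ℝ (insert 0 ((fun w : Fin d → ℤ => fun j => (w j : ℝ)) ''
              (s : Set (Fin d → ℤ)))) → x = 0 ∨ x ∈ s) ∧
        convexHull ℝ (insert 0 ((fun w : Fin d → ℤ => fun j => (w j : ℝ)) ''
            (s : Set (Fin d → ℤ)))) ⊆
          convexHull ℝ (insert 0 (Set.range fun i => fun j => (v i j : ℝ)))) ∧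
      (⋃ s ∈ F, coneFS d s) = coneFam d m v ∧
      -- the cones intersect pairwise in common faces
      ∀ s ∈ F, ∀ t ∈ F, coneFS d s ∩ coneFS d t = coneFS d (s ∩ t) :=
  stmt13_general d m v
end

section
/- Every rational simplicial $d$-cone $C \subset \mathbb{R}^d$, $d \ge 3$, admits a unimodular triangulation $C = D_1 \cup \cdots \cup D_T$ such that $\operatorname{Hilb}(D_t) \subset \frac{d}{2}\left(\frac{3}{2}\right)^{\mu(\Delta_C)-2} \Delta_C$ for all $t$. -/
open Pointwise

/-!
Start from the cone `C` itself and refine by stellar subdivisions. If a cone `D` of the current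
triangulation is not unimodular, some nonzero lattice point `z = ∑_{w ∈ G} λ_w w` with
`0 < λ_w < 1` lies in the parallelepiped spanned by a set `G` of generators of `D`; of `z` and its
reflection `∑_{w ∈ G} w - z` keep the one of smaller height `φ`, the linear form equal to `1` on
every `v_i`, so that `2 φ(z) ≤ ∑_{w ∈ G} φ(w)`. Subdividing at `z` replaces every cone `s ⊇ G` by
the cones `s - g + z`, `g ∈ G`, of multiplicity `λ_g μ(s) < μ(s)`, so the process stops at a
unimodular triangulation. Each step multiplies the height sum of a cone by at most `3/2` while
lowering its multiplicity, so a cone of multiplicity `μ` keeps height sum at most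
`d (3/2)^(μ(Δ_C) - μ)`; a new generator has at most half the height sum of a cone of multiplicity
`≥ 2`, i.e. height at most `d/2 (3/2)^(μ(Δ_C) - 2)`, which is the claimed dilate of `Δ_C`.
-/

open Finset

noncomputable section

namespace UnimodularTriangulation

lemma sum_biUnion_le {ι α M : Type*} [DecidableEq α] [AddCommMonoid M] [PartialOrder M]
    [IsOrderedAddMonoid M] (s : Finset ι) (t : ι → Finset α) {f : α → M} (hf : ∀ x, 0 ≤ f x) :
    ∑ x ∈ s.biUnion t, f x ≤ ∑ i ∈ s, ∑ x ∈ t i, f x :=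
  calc ∑ x ∈ s.biUnion t, f x = ∑ x ∈ (s.sigma t).image Sigma.snd, f x := by
        congr 1; ext; simp
    _ ≤ ∑ x ∈ s.sigma t, f x.2 := sum_image_le_of_nonneg fun x _ => hf x
    _ = ∑ i ∈ s, ∑ x ∈ t i, f x := sum_sigma s t _

lemma sum_smul_mem_smul_convexHull_insert_zero {ι E : Type*} [Fintype ι] [AddCommGroup E]
    [Module ℝ E] (p : ι → E) {c : ι → ℝ} (hc : ∀ i, 0 ≤ c i) {B : ℝ} (hB : 0 < B)
    (hsum : ∑ i, c i ≤ B) : ∑ i, c i • p i ∈ B • convexHull ℝ (insert 0 (Set.range p)) := by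
  refine ⟨∑ i, (c i / B) • p i, ?_, by simp [smul_sum, smul_smul, mul_div_cancel₀ _ hB.ne']⟩
  have hmem := (convex_convexHull ℝ (insert 0 (Set.range p))).sum_mem (t := univ)
    (w := fun o : Option ι => o.elim (1 - ∑ i, c i / B) fun i => c i / B)
    (z := fun o => o.elim 0 p) (fun o _ => ?_) (by simp [Fintype.sum_option])
    (fun o _ => subset_convexHull ℝ _ (by cases o <;> simp))
  · simpa [Fintype.sum_option] using hmem
  · cases o with
    | none => simpa [← sum_div, div_le_one hB] using hsum
    | some i => exact div_nonneg (hc i) hB.le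

lemma exists_linearMap_apply_eq_one {K E ι : Type*} [Field K] [AddCommGroup E] [Module K E]
    {p : ι → E} (hp : LinearIndependent K p) : ∃ φ : E →ₗ[K] K, ∀ i, φ (p i) = 1 := by
  obtain ⟨φ, hφ⟩ :=
    LinearMap.exists_extend (Finsupp.linearCombination K (fun _ => (1 : K)) ∘ₗ hp.repr)
  refine ⟨φ, fun i => ?_⟩
  have := congr($hφ ⟨p i, Submodule.subset_span (Set.mem_range_self i)⟩)
  simpa [hp.repr_eq_single i ⟨p i, _⟩ rfl] using this

variable {d : ℕ}

def toReal : (Fin d → ℤ) →+ (Fin d → ℝ) where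
  toFun w j := w j
  map_zero' := by ext; simp
  map_add' _ _ := by ext; simp

@[simp]
lemma toReal_apply (w : Fin d → ℤ) (j : Fin d) : toReal w j = w j := rfl

lemma toReal_injective : Function.Injective (toReal (d := d)) :=
  fun _ _ h => funext fun j => by simpa using congrFun h j

lemma toReal_zsmul (n : ℤ) (w : Fin d → ℤ) : toReal (n • w) = (n : ℝ) • toReal w := by
  ext j; simp

section Cones

variable {s t u : Finset (Fin d → ℤ)} {x : Fin d → ℝ}

lemma mem_coneFS_iff :
    x ∈ coneFS d s ↔ ∃ c : (Fin d → ℤ) → ℝ, (∀ w ∈ s, 0 ≤ c w) ∧ x = ∑ w ∈ s, c w • toReal w := by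
  refine ⟨fun ⟨c, hc, hx⟩ => ⟨c, fun w _ => hc w, hx⟩, fun ⟨c, hc, hx⟩ => ?_⟩
  refine ⟨fun w => if w ∈ s then c w else 0, fun w => ?_, hx.trans (sum_congr rfl fun w hw => ?_)⟩
  · by_cases hw : w ∈ s <;> simp [hw, hc]
  · simp only [if_pos hw]; rfl

lemma mem_coneFam_iff {m : ℕ} {v : Fin m → Fin d → ℤ} :
    x ∈ coneFam d m v ↔ ∃ c : Fin m → ℝ, (∀ i, 0 ≤ c i) ∧ x = ∑ i, c i • toReal (v i) :=
  Iff.rfl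

lemma coneFS_mono (h : s ⊆ t) : coneFS d s ⊆ coneFS d t := by
  intro x hx
  obtain ⟨c, hc, rfl⟩ := mem_coneFS_iff.mp hx
  refine mem_coneFS_iff.mpr ⟨fun w => if w ∈ s then c w else 0, fun w _ => ?_, ?_⟩
  · by_cases hw : w ∈ s <;> simp [hw, hc]
  · simp only [ite_smul, zero_smul, sum_ite_mem, inter_eq_right.mpr h]

lemma toReal_mem_coneFS {w : Fin d → ℤ} (hw : w ∈ s) : toReal w ∈ coneFS d s :=
  mem_coneFS_iff.mpr ⟨fun u => if u = w then 1 else 0, fun u _ => by positivity,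
    by simp [ite_smul, hw]⟩

lemma mem_coneFS_erase {c : (Fin d → ℤ) → ℝ} {g : Fin d → ℤ} (hc : ∀ w ∈ s, 0 ≤ c w)
    (hx : x = ∑ w ∈ s, c w • toReal w) (hg : c g = 0) : x ∈ coneFS d (s.erase g) :=
  mem_coneFS_iff.mpr ⟨c, fun w hw => hc w (mem_of_mem_erase hw),
    by rw [hx, sum_erase s (by rw [hg, zero_smul])]⟩

lemma coneFS_image_univ {m : ℕ} {v : Fin m → Fin d → ℤ} (hv : Function.Injective v) :
    coneFS d (univ.image v) = coneFam d m v := by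
  ext x
  rw [mem_coneFS_iff, mem_coneFam_iff]
  constructor
  · rintro ⟨c, hc, rfl⟩
    exact ⟨c ∘ v, fun i => hc _ (mem_image_of_mem v (mem_univ i)), sum_image hv.injOn⟩
  · rintro ⟨c, hc, rfl⟩
    refine ⟨Function.extend v c 0, fun w hw => ?_, by simp [sum_image hv.injOn, hv.extend_apply]⟩
    obtain ⟨i, -, rfl⟩ := mem_image.mp hw
    simpa [hv.extend_apply] using hc i

lemma coeff_eq_of_sum_eq (hs : LinearIndepOn ℝ toReal (s : Set (Fin d → ℤ))) (hus : u ⊆ s)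
    {r c : (Fin d → ℤ) → ℝ} (h : ∑ w ∈ u, r w • toReal w = ∑ w ∈ s, c w • toReal w) :
    ∀ w ∈ s, c w = if w ∈ u then r w else 0 := by
  intro w hw
  refine sub_eq_zero.mp (linearIndepOn_finset_iff.mp hs (fun w => c w - if w ∈ u then r w else 0)
    ?_ w hw)
  simp only [sub_smul, ite_smul, zero_smul, sum_sub_distrib, sum_ite_mem, inter_eq_right.mpr hus,
    h, sub_self]

lemma coeff_eq_zero_of_mem_coneFS (hs : LinearIndepOn ℝ toReal (s : Set (Fin d → ℤ)))
    (hface : coneFS d s ∩ coneFS d t = coneFS d (s ∩ t)) {r : (Fin d → ℤ) → ℝ}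
    (hx : x = ∑ w ∈ s, r w • toReal w) (hxs : x ∈ coneFS d s) (hxt : x ∈ coneFS d t) :
    ∀ w ∈ s, w ∉ t → r w = 0 := by
  obtain ⟨c, -, hc⟩ := mem_coneFS_iff.mp (hface ▸ Set.mem_inter hxs hxt)
  intro w hws hwt
  rw [coeff_eq_of_sum_eq hs inter_subset_left (hc.symm.trans hx) w hws,
    if_neg fun h => hwt (mem_inter.mp h).2]

lemma eq_sum_inter_of_mem_coneFS (hs : LinearIndepOn ℝ toReal (s : Set (Fin d → ℤ)))
    (hface : coneFS d s ∩ coneFS d t = coneFS d (s ∩ t)) {r : (Fin d → ℤ) → ℝ}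
    (hx : x = ∑ w ∈ s, r w • toReal w) (hxs : x ∈ coneFS d s) (hxt : x ∈ coneFS d t) :
    x = ∑ w ∈ s ∩ t, r w • toReal w := by
  refine hx.trans (sum_subset inter_subset_left fun w hws hwst => ?_).symm
  rw [coeff_eq_zero_of_mem_coneFS hs hface hx hxs hxt w hws fun hwt =>
    hwst (mem_inter.mpr ⟨hws, hwt⟩), zero_smul]

lemma exists_sum_eq (hs : LinearIndepOn ℝ toReal (s : Set (Fin d → ℤ))) (hcard : s.card = d)
    (x : Fin d → ℝ) : ∃ c : (Fin d → ℤ) → ℝ, x = ∑ w ∈ s, c w • toReal w := by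
  have hspan : Submodule.span ℝ (toReal '' (s : Set (Fin d → ℤ))) = ⊤ := by
    rw [Set.image_eq_range]
    exact LinearIndependent.span_eq_top_of_card_eq_finrank' hs (by simp [hcard])
  obtain ⟨c, hc⟩ :=
    (Submodule.mem_span_image_finset_iff_exists_fun' ℝ).mp (hspan ▸ Submodule.mem_top)
  exact ⟨c, hc.symm⟩

end Cones

section Multiplicity

lemma exists_injective_image_eq {s : Finset (Fin d → ℤ)} (h : s.card = d) :
    ∃ a : Fin d → Fin d → ℤ, Function.Injective a ∧ univ.image a = s := by
  set a : Fin d → Fin d → ℤ := fun i => s.equivFin.symm (Fin.cast h.symm i)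
  have ha : Function.Injective a :=
    Subtype.val_injective.comp (s.equivFin.symm.injective.comp (Fin.cast_injective _))
  refine ⟨a, ha, eq_of_subset_of_card_le (fun w hw => ?_)
    (by simp [card_image_of_injective _ ha, h])⟩
  obtain ⟨i, -, rfl⟩ := mem_image.mp hw
  exact coe_mem _

lemma natAbs_det_eq_of_range_eq {a b : Fin d → Fin d → ℤ} (ha : Function.Injective a)
    (hb : Function.Injective b) (hab : Set.range a = Set.range b) :
    (Matrix.of a).det.natAbs = (Matrix.of b).det.natAbs := by
  let σ := (Equiv.ofInjective a ha).trans ((Equiv.setCongr hab).trans (Equiv.ofInjective b hb).symm)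
  have hσ : Matrix.of a = (Matrix.of b).submatrix σ id := by
    ext i j
    simp only [σ, Matrix.submatrix_apply, Matrix.of_apply, Equiv.trans_apply, id]
    rw [Equiv.apply_ofInjective_symm hb]
    rfl
  rw [hσ, Matrix.det_permute]
  simp [Int.natAbs_mul]

-- The multiplicity `|det|` of a cone with `d` generators, with junk value `0` otherwise.
def mult (s : Finset (Fin d → ℤ)) : ℕ :=
  if h : s.card = d then (Matrix.of (exists_injective_image_eq h).choose).det.natAbs else 0

lemma mult_image {a : Fin d → Fin d → ℤ} (ha : Function.Injective a) :
    mult (univ.image a) = (Matrix.of a).det.natAbs := by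
  have h : (univ.image a).card = d := by simp [card_image_of_injective _ ha]
  obtain ⟨hb, hba⟩ := (exists_injective_image_eq h).choose_spec
  rw [mult, dif_pos h]
  refine natAbs_det_eq_of_range_eq hb ha ?_
  simpa [Set.image_univ] using congrArg (fun s : Finset (Fin d → ℤ) => (s : Set (Fin d → ℤ))) hba

lemma linearIndepOn_image_iff_det_ne_zero {a : Fin d → Fin d → ℤ} (ha : Function.Injective a) :
    LinearIndepOn ℝ toReal (univ.image a : Set (Fin d → ℤ)) ↔ (Matrix.of a).det ≠ 0 := by
  rw [coe_image, coe_univ, Set.image_univ, linearIndepOn_range_iff ha]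
  have hrows : toReal ∘ a = ((Matrix.of a).map (Int.cast : ℤ → ℝ)).row := rfl
  rw [hrows, Matrix.linearIndependent_rows_iff_isUnit, Matrix.isUnit_iff_isUnit_det,
    isUnit_iff_ne_zero, ← Int.cast_ne_zero (α := ℝ), Int.cast_det]

lemma linearIndepOn_iff_mult_ne_zero {s : Finset (Fin d → ℤ)} (h : s.card = d) :
    LinearIndepOn ℝ toReal (s : Set (Fin d → ℤ)) ↔ mult s ≠ 0 := by
  obtain ⟨a, ha, rfl⟩ := exists_injective_image_eq h
  rw [mult_image ha, linearIndepOn_image_iff_det_ne_zero ha, Int.natAbs_ne_zero]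

lemma card_insert_erase {s : Finset (Fin d → ℤ)} {g z : Fin d → ℤ} (hg : g ∈ s) (hz : z ∉ s) :
    (insert z (s.erase g)).card = s.card := by
  rw [card_insert_of_notMem fun h => hz (mem_of_mem_erase h), card_erase_add_one hg]

lemma mult_insert_erase {s : Finset (Fin d → ℤ)} (h : s.card = d) {g z : Fin d → ℤ} (hg : g ∈ s)
    (hz : z ∉ s) {c : (Fin d → ℤ) → ℝ} (hzc : toReal z = ∑ w ∈ s, c w • toReal w) :
    (mult (insert z (s.erase g)) : ℝ) = |c g| * mult s := by
  obtain ⟨a, ha, rfl⟩ := exists_injective_image_eq h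
  obtain ⟨k, -, rfl⟩ := mem_image.mp hg
  have himg : univ.image (Function.update a k z) = insert z ((univ.image a).erase (a k)) := by
    ext w
    simp only [mem_image, mem_univ, true_and, mem_insert, mem_erase, Function.update_apply]
    constructor
    · rintro ⟨i, rfl⟩
      split_ifs with hi
      · exact Or.inl rfl
      · exact Or.inr ⟨fun e => hi (ha e), i, rfl⟩
    · rintro (rfl | ⟨hne, i, rfl⟩)
      · exact ⟨k, if_pos rfl⟩
      · exact ⟨i, if_neg fun hi => hne (by rw [hi])⟩
  have ha' : Function.Injective (Function.update a k z) := by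
    rw [← Set.injOn_univ, ← coe_univ, ← card_image_iff, himg, card_insert_erase hg hz]
    simp [card_image_of_injective _ ha]
  have hrow : toReal z = ∑ i, c (a i) • ((Matrix.of a).map (Int.cast : ℤ → ℝ)) i := by
    rw [hzc, sum_image ha.injOn]; rfl
  have hmap : (Matrix.of (Function.update a k z)).map (Int.cast : ℤ → ℝ)
      = ((Matrix.of a).map (Int.cast : ℤ → ℝ)).updateRow k (toReal z) := by
    ext i j
    by_cases hi : i = k
    · subst hi; simp
    · simp [Matrix.updateRow_ne hi, Function.update_of_ne hi]
  rw [← himg, mult_image ha', mult_image ha, Nat.cast_natAbs, Nat.cast_natAbs, Int.cast_abs,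
    Int.cast_abs, Int.cast_det, Int.cast_det, hmap, hrow, Matrix.det_updateRow_sum, smul_eq_mul,
    abs_mul]

end Multiplicity

-- `λ` is extended by `0` off `G`, so that it also expresses `z` over every cone containing `G`.
structure IsBoxPoint (G : Finset (Fin d → ℤ)) (lam : (Fin d → ℤ) → ℝ) (z : Fin d → ℤ) : Prop where
  nonempty : G.Nonempty
  pos : ∀ w ∈ G, 0 < lam w
  lt_one : ∀ w ∈ G, lam w < 1
  eq_zero : ∀ w ∉ G, lam w = 0
  eq_sum : toReal z = ∑ w ∈ G, lam w • toReal w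

lemma exists_isBoxPoint {s : Finset (Fin d → ℤ)} (hcard : s.card = d)
    (hs : LinearIndepOn ℝ toReal (s : Set (Fin d → ℤ)))
    (hspan : Submodule.span ℤ (s : Set (Fin d → ℤ)) ≠ ⊤) :
    ∃ G ⊆ s, ∃ lam z, IsBoxPoint G lam z := by
  obtain ⟨y, hy⟩ : ∃ y, y ∉ Submodule.span ℤ (s : Set (Fin d → ℤ)) := by
    by_contra! h
    exact hspan (Submodule.eq_top_iff'.mpr h)
  obtain ⟨c, hc⟩ := exists_sum_eq hs hcard (toReal y)
  set G := s.filter fun w => Int.fract (c w) ≠ 0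
  set lam : (Fin d → ℤ) → ℝ := fun w => if w ∈ s then Int.fract (c w) else 0
  have hlam : ∀ w ∉ G, lam w = 0 := fun w hw => by
    by_cases hws : w ∈ s
    · simpa [lam, G, hws] using hw
    · simp [lam, hws]
  have hz : toReal (y - ∑ w ∈ s, ⌊c w⌋ • w) = ∑ w ∈ G, lam w • toReal w := by
    rw [map_sub, map_sum, hc, ← sum_sub_distrib, sum_subset (filter_subset _ s) fun w _ hw => by
      rw [hlam w hw, zero_smul]]
    exact sum_congr rfl fun w hw => by
      rw [toReal_zsmul, ← sub_smul, ← Int.fract]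
      simp only [lam, if_pos hw]
  refine ⟨G, filter_subset _ s, lam, _, ⟨?_, fun w hw => ?_, fun w hw => ?_, hlam, hz⟩⟩
  · rw [nonempty_iff_ne_empty]
    intro hG
    rw [hG, sum_empty, ← map_zero toReal] at hz
    refine hy (sub_eq_zero.mp (toReal_injective hz) ▸ Submodule.sum_mem _ fun w hw => ?_)
    exact Submodule.smul_mem _ _ (Submodule.subset_span hw)
  · obtain ⟨hws, hne⟩ := mem_filter.mp hw
    simpa [lam, hws] using (Int.fract_nonneg (c w)).lt_of_ne' hne
  · simpa [lam, (mem_filter.mp hw).1] using Int.fract_lt_one (c w)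

namespace IsBoxPoint

variable {G s t : Finset (Fin d → ℤ)} {lam : (Fin d → ℤ) → ℝ} {z g : Fin d → ℤ} {x : Fin d → ℝ}

lemma nonneg (hz : IsBoxPoint G lam z) (w : Fin d → ℤ) : 0 ≤ lam w := by
  by_cases hw : w ∈ G
  exacts [(hz.pos w hw).le, (hz.eq_zero w hw).ge]

lemma eq_sum_of_subset (hz : IsBoxPoint G lam z) (hGs : G ⊆ s) :
    toReal z = ∑ w ∈ s, lam w • toReal w := by
  rw [hz.eq_sum]
  exact sum_subset hGs fun w _ hw => by rw [hz.eq_zero w hw, zero_smul]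

lemma reflect (hz : IsBoxPoint G lam z) :
    IsBoxPoint G (fun w => if w ∈ G then 1 - lam w else 0) (∑ w ∈ G, w - z) where
  nonempty := hz.nonempty
  pos w hw := by simpa [hw] using hz.lt_one w hw
  lt_one w hw := by simpa [hw] using hz.pos w hw
  eq_zero w hw := if_neg hw
  eq_sum := by
    rw [map_sub, map_sum, hz.eq_sum, ← sum_sub_distrib]
    exact sum_congr rfl fun w hw => by rw [if_pos hw, sub_smul, one_smul]

lemma notMem (hz : IsBoxPoint G lam z) (hs : LinearIndepOn ℝ toReal (s : Set (Fin d → ℤ)))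
    (hGs : G ⊆ s) : z ∉ s := by
  intro hzs
  have h := coeff_eq_of_sum_eq hs (singleton_subset_iff.mpr hzs) (r := fun _ => 1)
    (by rw [sum_singleton, one_smul]; exact hz.eq_sum_of_subset hGs) z hzs
  rw [if_pos (mem_singleton_self z)] at h
  by_cases hzG : z ∈ G
  · exact (hz.lt_one z hzG).ne h
  · exact one_ne_zero (h.symm.trans (hz.eq_zero z hzG))

lemma mult_insert_erase_mem_Ioo (hz : IsBoxPoint G lam z) (hcard : s.card = d)
    (hs : LinearIndepOn ℝ toReal (s : Set (Fin d → ℤ))) (hGs : G ⊆ s) (hg : g ∈ G) :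
    mult (insert z (s.erase g)) ∈ Set.Ioo 0 (mult s) := by
  have hm := mult_insert_erase hcard (hGs hg) (hz.notMem hs hGs) (hz.eq_sum_of_subset hGs)
  rw [abs_of_pos (hz.pos g hg)] at hm
  have hs0 : (0 : ℝ) < mult s := Nat.cast_pos.mpr
    (Nat.pos_of_ne_zero ((linearIndepOn_iff_mult_ne_zero hcard).mp hs))
  constructor
  · exact_mod_cast hm ▸ mul_pos (hz.pos g hg) hs0
  · exact_mod_cast hm ▸ mul_lt_of_lt_one_left hs0 (hz.lt_one g hg)

lemma sum_pow_mult_lt (hz : IsBoxPoint G lam z) (hcard : s.card = d)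
    (hs : LinearIndepOn ℝ toReal (s : Set (Fin d → ℤ))) (hGs : G ⊆ s) :
    ∑ u ∈ G.image (fun g => insert z (s.erase g)), (d + 1) ^ mult u < (d + 1) ^ mult s := by
  have hlt := fun g (hg : g ∈ G) => hz.mult_insert_erase_mem_Ioo hcard hs hGs hg
  obtain ⟨g, hg⟩ := hz.nonempty
  have hms : 1 ≤ mult s := lt_trans (hlt g hg).1 (hlt g hg).2
  calc ∑ u ∈ G.image (fun g => insert z (s.erase g)), (d + 1) ^ mult u
      ≤ ∑ g ∈ G, (d + 1) ^ mult (insert z (s.erase g)) :=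
        sum_image_le_of_nonneg fun _ _ => Nat.zero_le _
    _ ≤ ∑ _g ∈ G, (d + 1) ^ (mult s - 1) := sum_le_sum fun g hg =>
        Nat.pow_le_pow_right d.succ_pos (Nat.le_sub_one_of_lt (hlt g hg).2)
    _ = G.card * (d + 1) ^ (mult s - 1) := by rw [sum_const, smul_eq_mul]
    _ < (d + 1) * (d + 1) ^ (mult s - 1) :=
        Nat.mul_lt_mul_of_pos_right (Nat.lt_succ_of_le ((card_le_card hGs).trans hcard.le))
          (Nat.pow_pos d.succ_pos)
    _ = (d + 1) ^ mult s := by rw [← pow_succ', Nat.sub_add_cancel hms]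

lemma exists_coeff_of_mem_coneFS_insert_erase (hz : IsBoxPoint G lam z) (hGs : G ⊆ s)
    (hzs : z ∉ s) (hx : x ∈ coneFS d (insert z (s.erase g))) :
    ∃ r : (Fin d → ℤ) → ℝ, (∀ w ∈ s, 0 ≤ r w) ∧ x = ∑ w ∈ s, r w • toReal w ∧
      ∀ w ∈ G, r g * lam w ≤ r w * lam g := by
  obtain ⟨c, hc, rfl⟩ := mem_coneFS_iff.mp hx
  have hc' : ∀ w ∈ s, 0 ≤ if w = g then 0 else c w := fun w hw => by
    split_ifs with hwg
    exacts [le_rfl, hc w (mem_insert_of_mem (mem_erase.mpr ⟨hwg, hw⟩))]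
  refine ⟨fun w => (if w = g then 0 else c w) + c z * lam w,
    fun w hw => add_nonneg (hc' w hw) (mul_nonneg (hc z (mem_insert_self _ _)) (hz.nonneg w)),
    ?_, fun w hw => ?_⟩
  · have herase : ∑ w ∈ s.erase g, c w • toReal w
        = ∑ w ∈ s, (if w = g then 0 else c w) • toReal w := by
      rw [← filter_ne' s g, sum_filter]
      exact sum_congr rfl fun w _ => by split_ifs <;> simp_all
    rw [sum_insert fun h => hzs (mem_of_mem_erase h), herase, hz.eq_sum_of_subset hGs, smul_sum,
      ← sum_add_distrib]
    exact sum_congr rfl fun w _ => by rw [smul_smul, add_smul, add_comm]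
  · simp only [↓reduceIte, zero_add]
    calc c z * lam g * lam w = c z * lam w * lam g := by ring
      _ ≤ ((if w = g then 0 else c w) + c z * lam w) * lam g :=
        mul_le_mul_of_nonneg_right (le_add_of_nonneg_left (hc' w (hGs hw))) (hz.nonneg g)

lemma mem_coneFS_insert_filter (hz : IsBoxPoint G lam z) (hGs : G ⊆ s) (hzs : z ∉ s)
    (hg : g ∈ G) {r : (Fin d → ℤ) → ℝ} (hr : ∀ w ∈ s, 0 ≤ r w)
    (hx : x = ∑ w ∈ s, r w • toReal w) (hmin : ∀ w ∈ G, r g * lam w ≤ r w * lam g) :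
    x ∈ coneFS d (insert z (s.filter fun w => r g * lam w < r w * lam g)) := by
  -- trade `q = r g / λ g` copies of `z` for the generators in `G`; the minimality of `g` keeps the
  -- coefficients nonnegative, and those that vanish are dropped
  have hlg := hz.pos g hg
  set q := r g / lam g
  have hdiff : ∀ w, r w - lam w * q = (r w * lam g - r g * lam w) / lam g := fun w => by
    simp only [q]; field_simp
  have hsum : x = q • toReal z + ∑ w ∈ s.filter (fun w => r g * lam w < r w * lam g),
      (r w - lam w * q) • toReal w := by
    rw [sum_filter_of_ne, hz.eq_sum_of_subset hGs, smul_sum, ← sum_add_distrib, hx]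
    · exact sum_congr rfl fun w _ => by rw [smul_smul, ← add_smul]; ring_nf
    · intro w hw hne
      by_contra hle
      refine hne ?_
      have hge : r g * lam w ≤ r w * lam g := by
        by_cases hwG : w ∈ G
        · exact hmin w hwG
        · rw [hz.eq_zero w hwG, mul_zero]; exact mul_nonneg (hr w hw) hlg.le
      rw [hdiff, show r w * lam g - r g * lam w = 0 by linarith [not_lt.mp hle], zero_div,
        zero_smul]
  refine mem_coneFS_iff.mpr ⟨Function.update (fun w => r w - lam w * q) z q, fun w hw => ?_, ?_⟩
  · rcases mem_insert.mp hw with rfl | hw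
    · rw [Function.update_self]; exact div_nonneg (hr g (hGs hg)) hlg.le
    · rw [Function.update_of_ne (ne_of_mem_of_not_mem (mem_of_mem_filter w hw) hzs), hdiff]
      exact div_nonneg (by linarith [(mem_filter.mp hw).2]) hlg.le
  · rw [sum_insert fun h => hzs (mem_of_mem_filter z h), Function.update_self, hsum]
    congr 1
    exact sum_congr rfl fun w hw => by
      rw [Function.update_of_ne (ne_of_mem_of_not_mem (mem_of_mem_filter w hw) hzs)]

lemma coneFS_eq_biUnion (hz : IsBoxPoint G lam z)
    (hs : LinearIndepOn ℝ toReal (s : Set (Fin d → ℤ))) (hGs : G ⊆ s) :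
    coneFS d s = ⋃ g ∈ G, coneFS d (insert z (s.erase g)) := by
  have hzs := hz.notMem hs hGs
  refine subset_antisymm (fun x hx => ?_) (Set.iUnion₂_subset fun g _ x hx => ?_)
  · obtain ⟨c, hc, hcx⟩ := mem_coneFS_iff.mp hx
    obtain ⟨g, hg, hgmin⟩ := exists_min_image G (fun g => c g / lam g) hz.nonempty
    have hmin : ∀ w ∈ G, c g * lam w ≤ c w * lam g := fun w hw =>
      (div_le_div_iff₀ (hz.pos g hg) (hz.pos w hw)).mp (hgmin w hw)
    refine Set.mem_biUnion hg (coneFS_mono ?_ (hz.mem_coneFS_insert_filter hGs hzs hg hc hcx hmin))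
    exact insert_subset_insert _ fun w hw =>
      mem_erase.mpr ⟨fun hwg => (hwg ▸ (mem_filter.mp hw).2).false, mem_of_mem_filter w hw⟩
  · obtain ⟨r, hr, hrx, -⟩ := hz.exists_coeff_of_mem_coneFS_insert_erase hGs hzs hx
    exact mem_coneFS_iff.mpr ⟨r, hr, hrx⟩

lemma coneFS_insert_erase_inter_insert_erase (hz : IsBoxPoint G lam z)
    (hs : LinearIndepOn ℝ toReal (s : Set (Fin d → ℤ)))
    (ht : LinearIndepOn ℝ toReal (t : Set (Fin d → ℤ))) (hGs : G ⊆ s) (hGt : G ⊆ t)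
    (hface : coneFS d s ∩ coneFS d t = coneFS d (s ∩ t)) {h : Fin d → ℤ} (hg : g ∈ G)
    (hh : h ∈ G) :
    coneFS d (insert z (s.erase g)) ∩ coneFS d (insert z (t.erase h))
      = coneFS d (insert z (s.erase g) ∩ insert z (t.erase h)) := by
  refine subset_antisymm (fun x ⟨hxs, hxt⟩ => ?_)
    (Set.subset_inter (coneFS_mono inter_subset_left) (coneFS_mono inter_subset_right))
  obtain ⟨r, hr, hrx, hming⟩ :=
    hz.exists_coeff_of_mem_coneFS_insert_erase hGs (hz.notMem hs hGs) hxs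
  obtain ⟨r', hr', hr'x, hmin'⟩ :=
    hz.exists_coeff_of_mem_coneFS_insert_erase hGt (hz.notMem ht hGt) hxt
  have hx := eq_sum_inter_of_mem_coneFS hs hface hrx (mem_coneFS_iff.mpr ⟨r, hr, hrx⟩)
    (mem_coneFS_iff.mpr ⟨r', hr', hr'x⟩)
  -- `x` has the same coefficients over `s` and over `t`, so `g` and `h` both minimise `r / λ`
  have hrr' : ∀ w ∈ G, r' w = r w := fun w hw => by
    rw [coeff_eq_of_sum_eq ht inter_subset_right (hx.symm.trans hr'x) w (hGt hw),
      if_pos (mem_inter.mpr ⟨hGs hw, hGt hw⟩)]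
  have hminh : r h * lam g ≤ r g * lam h := by
    rw [← hrr' h hh, ← hrr' g hg]; exact hmin' g hg
  have hmem := hz.mem_coneFS_insert_filter (subset_inter hGs hGt)
    (fun hzst => hz.notMem hs hGs (mem_of_mem_inter_left hzst)) hg
    (fun w hw => hr w (mem_of_mem_inter_left hw)) hx hming
  refine coneFS_mono (fun w hw => ?_) hmem
  rcases mem_insert.mp hw with rfl | hw
  · exact mem_inter.mpr ⟨mem_insert_self _ _, mem_insert_self _ _⟩
  obtain ⟨hwst, hlt⟩ := mem_filter.mp hw
  have hwg : w ≠ g := fun hwg => (hwg ▸ hlt).false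
  have hwh : w ≠ h := fun hwh => (hwh ▸ hlt).not_ge hminh
  exact mem_inter.mpr ⟨mem_insert_of_mem (mem_erase.mpr ⟨hwg, (mem_inter.mp hwst).1⟩),
    mem_insert_of_mem (mem_erase.mpr ⟨hwh, (mem_inter.mp hwst).2⟩)⟩

lemma coneFS_insert_erase_inter (hz : IsBoxPoint G lam z)
    (hs : LinearIndepOn ℝ toReal (s : Set (Fin d → ℤ))) (hGs : G ⊆ s) (hGt : ¬ G ⊆ t)
    (hface : coneFS d s ∩ coneFS d t = coneFS d (s ∩ t)) (hg : g ∈ G) :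
    coneFS d (insert z (s.erase g)) ∩ coneFS d t = coneFS d (insert z (s.erase g) ∩ t) := by
  refine subset_antisymm (fun x ⟨hxs, hxt⟩ => ?_)
    (Set.subset_inter (coneFS_mono inter_subset_left) (coneFS_mono inter_subset_right))
  obtain ⟨r, hr, hrx, hmin⟩ :=
    hz.exists_coeff_of_mem_coneFS_insert_erase hGs (hz.notMem hs hGs) hxs
  have hxs' : x ∈ coneFS d s := mem_coneFS_iff.mpr ⟨r, hr, hrx⟩
  -- some `k ∈ G` is not in `t`, so its coefficient vanishes, hence so does the minimal one at `g`
  obtain ⟨k, hkG, hkt⟩ := not_subset.mp hGt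
  have hk := coeff_eq_zero_of_mem_coneFS hs hface hrx hxs' hxt k (hGs hkG) hkt
  have hrg : r g = 0 := by
    have := hmin k hkG
    rw [hk, zero_mul] at this
    exact le_antisymm (nonpos_of_mul_nonpos_left this (hz.pos k hkG)) (hr g (hGs hg))
  refine coneFS_mono (fun w hw => ?_)
    (mem_coneFS_erase (fun w hw => hr w (mem_of_mem_inter_left hw))
      (eq_sum_inter_of_mem_coneFS hs hface hrx hxs' hxt) hrg)
  obtain ⟨hwg, hwst⟩ := mem_erase.mp hw
  exact mem_inter.mpr ⟨mem_insert_of_mem (mem_erase.mpr ⟨hwg, (mem_inter.mp hwst).1⟩),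
    (mem_inter.mp hwst).2⟩

end IsBoxPoint

section Stellar

structure IsTriangulation (F : Finset (Finset (Fin d → ℤ))) (C : Set (Fin d → ℝ)) : Prop where
  card_eq : ∀ s ∈ F, s.card = d
  linearIndepOn : ∀ s ∈ F, LinearIndepOn ℝ toReal (s : Set (Fin d → ℤ))
  iUnion_eq : ⋃ s ∈ F, coneFS d s = C
  inter_eq : ∀ s ∈ F, ∀ t ∈ F, coneFS d s ∩ coneFS d t = coneFS d (s ∩ t)

lemma IsTriangulation.toReal_mem {F : Finset (Finset (Fin d → ℤ))} {C : Set (Fin d → ℝ)}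
    (hF : IsTriangulation F C) {s : Finset (Fin d → ℤ)} (hs : s ∈ F) {w : Fin d → ℤ}
    (hw : w ∈ s) : toReal w ∈ C :=
  hF.iUnion_eq ▸ Set.mem_biUnion hs (toReal_mem_coneFS hw)

def stellar (F : Finset (Finset (Fin d → ℤ))) (G : Finset (Fin d → ℤ)) (z : Fin d → ℤ) :
    Finset (Finset (Fin d → ℤ)) :=
  F.biUnion fun s => if G ⊆ s then G.image fun g => insert z (s.erase g) else {s}

variable {F : Finset (Finset (Fin d → ℤ))} {C : Set (Fin d → ℝ)} {G : Finset (Fin d → ℤ)}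
  {lam : (Fin d → ℤ) → ℝ} {z : Fin d → ℤ} {φ : (Fin d → ℝ) →ₗ[ℝ] ℝ} {B : ℝ} {m : ℕ}

lemma mem_stellar {u : Finset (Fin d → ℤ)} :
    u ∈ stellar F G z ↔
      ∃ s ∈ F, (G ⊆ s ∧ ∃ g ∈ G, insert z (s.erase g) = u) ∨ (¬ G ⊆ s ∧ s = u) := by
  simp only [stellar, mem_biUnion]
  refine exists_congr fun s => and_congr_right fun _ => ?_
  split_ifs with hGs <;> simp [hGs, eq_comm]

lemma IsTriangulation.stellar (hF : IsTriangulation F C) (hz : IsBoxPoint G lam z) :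
    IsTriangulation (stellar F G z) C := by
  have hnew : ∀ s ∈ F, G ⊆ s → ∀ g ∈ G, (insert z (s.erase g)).card = d ∧
      LinearIndepOn ℝ toReal ((insert z (s.erase g) : Finset _) : Set (Fin d → ℤ)) :=
      fun s hs hGs g hg => by
    have hcard : (insert z (s.erase g)).card = d := by
      rw [card_insert_erase (hGs hg) (hz.notMem (hF.linearIndepOn s hs) hGs), hF.card_eq s hs]
    exact ⟨hcard, (linearIndepOn_iff_mult_ne_zero hcard).mpr
      (hz.mult_insert_erase_mem_Ioo (hF.card_eq s hs) (hF.linearIndepOn s hs) hGs hg).1.ne'⟩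
  refine ⟨fun u hu => ?_, fun u hu => ?_, ?_, fun u hu u' hu' => ?_⟩
  · obtain ⟨s, hs, ⟨hGs, g, hg, rfl⟩ | ⟨-, rfl⟩⟩ := mem_stellar.mp hu
    exacts [(hnew s hs hGs g hg).1, hF.card_eq s hs]
  · obtain ⟨s, hs, ⟨hGs, g, hg, rfl⟩ | ⟨-, rfl⟩⟩ := mem_stellar.mp hu
    exacts [(hnew s hs hGs g hg).2, hF.linearIndepOn s hs]
  · rw [← hF.iUnion_eq]
    refine subset_antisymm (Set.iUnion₂_subset fun u hu => ?_) (Set.iUnion₂_subset fun s hs => ?_)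
    · obtain ⟨s, hs, ⟨hGs, g, hg, rfl⟩ | ⟨-, rfl⟩⟩ := mem_stellar.mp hu
      · have hsub : coneFS d (insert z (s.erase g)) ⊆ coneFS d s := by
          rw [hz.coneFS_eq_biUnion (hF.linearIndepOn s hs) hGs]
          exact Set.subset_biUnion_of_mem (u := fun g => coneFS d (insert z (s.erase g))) hg
        exact hsub.trans (Set.subset_biUnion_of_mem (u := fun s => coneFS d s) hs)
      · exact Set.subset_biUnion_of_mem (u := fun s => coneFS d s) hs
    · by_cases hGs : G ⊆ s
      · rw [hz.coneFS_eq_biUnion (hF.linearIndepOn s hs) hGs]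
        exact Set.iUnion₂_subset fun g hg => Set.subset_biUnion_of_mem (u := fun s => coneFS d s)
          (mem_stellar.mpr ⟨s, hs, Or.inl ⟨hGs, g, hg, rfl⟩⟩)
      · exact Set.subset_biUnion_of_mem (u := fun s => coneFS d s)
          (mem_stellar.mpr ⟨s, hs, Or.inr ⟨hGs, rfl⟩⟩)
  · obtain ⟨s, hs, ⟨hGs, g, hg, rfl⟩ | ⟨hGs, rfl⟩⟩ := mem_stellar.mp hu <;>
    obtain ⟨t, ht, ⟨hGt, h, hh, rfl⟩ | ⟨hGt, rfl⟩⟩ := mem_stellar.mp hu'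
    · exact hz.coneFS_insert_erase_inter_insert_erase (hF.linearIndepOn s hs)
        (hF.linearIndepOn t ht) hGs hGt (hF.inter_eq s hs t ht) hg hh
    · exact hz.coneFS_insert_erase_inter (hF.linearIndepOn s hs) hGs hGt
        (hF.inter_eq s hs t ht) hg
    · rw [Set.inter_comm, inter_comm]
      exact hz.coneFS_insert_erase_inter (hF.linearIndepOn t ht) hGt hGs
        (hF.inter_eq t ht s hs) hh
    · exact hF.inter_eq s hs t ht

-- Base `d + 1`: a cone is replaced by at most `d` cones of smaller multiplicity.
def weight (F : Finset (Finset (Fin d → ℤ))) : ℕ := ∑ s ∈ F, (d + 1) ^ mult s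

lemma weight_stellar_lt (hF : IsTriangulation F C) (hz : IsBoxPoint G lam z)
    {D : Finset (Fin d → ℤ)} (hD : D ∈ F) (hGD : G ⊆ D) :
    weight (stellar F G z) < weight F := by
  refine (sum_biUnion_le F _ fun _ => Nat.zero_le _).trans_lt
    (sum_lt_sum (fun s hs => ?_) ⟨D, hD, ?_⟩)
  · split_ifs with hGs
    exacts [(hz.sum_pow_mult_lt (hF.card_eq s hs) (hF.linearIndepOn s hs) hGs).le,
      (sum_singleton _ _).le]
  · rw [if_pos hGD]
    exact hz.sum_pow_mult_lt (hF.card_eq D hD) (hF.linearIndepOn D hD) hGD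

lemma exists_isBoxPoint_two_mul_le (φ : (Fin d → ℝ) →ₗ[ℝ] ℝ) {s : Finset (Fin d → ℤ)}
    (hcard : s.card = d) (hs : LinearIndepOn ℝ toReal (s : Set (Fin d → ℤ)))
    (hspan : Submodule.span ℤ (s : Set (Fin d → ℤ)) ≠ ⊤) :
    ∃ G ⊆ s, ∃ lam z, IsBoxPoint G lam z ∧ 2 * φ (toReal z) ≤ ∑ w ∈ G, φ (toReal w) := by
  obtain ⟨G, hGs, lam, z, hz⟩ := exists_isBoxPoint hcard hs hspan
  have hsum : φ (toReal z) + φ (toReal (∑ w ∈ G, w - z)) = ∑ w ∈ G, φ (toReal w) := by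
    simp [map_sub, map_sum]
  rcases le_total (2 * φ (toReal z)) (∑ w ∈ G, φ (toReal w)) with h | h
  · exact ⟨G, hGs, lam, z, hz, h⟩
  · exact ⟨G, hGs, _, _, hz.reflect, by linarith⟩

structure IsHeightBounded (φ : (Fin d → ℝ) →ₗ[ℝ] ℝ) (B : ℝ) (m : ℕ)
    (F : Finset (Finset (Fin d → ℤ))) : Prop where
  apply_le : ∀ s ∈ F, ∀ w ∈ s, φ (toReal w) ≤ B
  mult_le : ∀ s ∈ F, mult s ≤ m
  sum_apply_le : ∀ s ∈ F, ∑ w ∈ s, φ (toReal w) ≤ d * (3 / 2 : ℝ) ^ (m - mult s)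

lemma IsHeightBounded.stellar (hb : IsHeightBounded φ B m F) (hF : IsTriangulation F C)
    (hC : ∀ x ∈ C, 0 ≤ φ x) (hB : ∀ k, 2 ≤ k → k ≤ m → (d : ℝ) / 2 * (3 / 2) ^ (m - k) ≤ B)
    (hz : IsBoxPoint G lam z) (hzφ : 2 * φ (toReal z) ≤ ∑ w ∈ G, φ (toReal w)) :
    IsHeightBounded φ B m (stellar F G z) := by
  suffices hnew : ∀ s ∈ F, G ⊆ s → ∀ g ∈ G, (∀ w ∈ insert z (s.erase g), φ (toReal w) ≤ B) ∧
      mult (insert z (s.erase g)) ≤ m ∧ ∑ w ∈ insert z (s.erase g), φ (toReal w) ≤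
        d * (3 / 2 : ℝ) ^ (m - mult (insert z (s.erase g))) by
    refine ⟨fun u hu => ?_, fun u hu => ?_, fun u hu => ?_⟩ <;>
    obtain ⟨s, hs, ⟨hGs, g, hg, rfl⟩ | ⟨-, rfl⟩⟩ := mem_stellar.mp hu
    exacts [(hnew s hs hGs g hg).1, hb.apply_le s hs, (hnew s hs hGs g hg).2.1, hb.mult_le s hs,
      (hnew s hs hGs g hg).2.2, hb.sum_apply_le s hs]
  intro s hs hGs g hg
  have hzs : z ∉ s := hz.notMem (hF.linearIndepOn s hs) hGs
  obtain ⟨hpos, hlt⟩ :=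
    hz.mult_insert_erase_mem_Ioo (hF.card_eq s hs) (hF.linearIndepOn s hs) hGs hg
  have hms := hb.mult_le s hs
  have hφs : ∀ w ∈ s, 0 ≤ φ (toReal w) := fun w hw => hC _ (hF.toReal_mem hs hw)
  have hzs' : 2 * φ (toReal z) ≤ ∑ w ∈ s, φ (toReal w) :=
    hzφ.trans (sum_le_sum_of_subset_of_nonneg hGs fun w hw _ => hφs w hw)
  have hsum := hb.sum_apply_le s hs
  refine ⟨fun w hw => ?_, hlt.le.trans hms, ?_⟩
  · rcases mem_insert.mp hw with rfl | hw
    · linarith [hB (mult s) (by omega) hms]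
    · exact hb.apply_le s hs w (mem_of_mem_erase hw)
  · calc ∑ w ∈ insert z (s.erase g), φ (toReal w)
        = φ (toReal z) + (∑ w ∈ s, φ (toReal w) - φ (toReal g)) := by
          rw [sum_insert fun h => hzs (mem_of_mem_erase h), sum_erase_eq_sub (hGs hg)]
      _ ≤ 3 / 2 * ∑ w ∈ s, φ (toReal w) := by linarith [hφs g (hGs hg)]
      _ ≤ 3 / 2 * (d * (3 / 2 : ℝ) ^ (m - mult s)) := by gcongr
      _ = d * (3 / 2 : ℝ) ^ (m - mult s + 1) := by ring
      _ ≤ d * (3 / 2 : ℝ) ^ (m - mult (insert z (s.erase g))) := by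
          gcongr
          · norm_num
          · omega

theorem exists_refinement_span_eq_top (hC : ∀ x ∈ C, 0 ≤ φ x)
    (hB : ∀ k, 2 ≤ k → k ≤ m → (d : ℝ) / 2 * (3 / 2) ^ (m - k) ≤ B)
    (hF : IsTriangulation F C) (hb : IsHeightBounded φ B m F) :
    ∃ F' : Finset (Finset (Fin d → ℤ)), IsTriangulation F' C ∧ IsHeightBounded φ B m F' ∧
      ∀ s ∈ F', Submodule.span ℤ (s : Set (Fin d → ℤ)) = ⊤ := by
  induction h : weight F using Nat.strong_induction_on generalizing F with
  | _ n ih =>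
    by_cases hall : ∀ s ∈ F, Submodule.span ℤ (s : Set (Fin d → ℤ)) = ⊤
    · exact ⟨F, hF, hb, hall⟩
    push Not at hall
    obtain ⟨D, hD, hspan⟩ := hall
    obtain ⟨G, hGD, lam, z, hz, hzφ⟩ :=
      exists_isBoxPoint_two_mul_le φ (hF.card_eq D hD) (hF.linearIndepOn D hD) hspan
    exact ih _ (h ▸ weight_stellar_lt hF hz hD hGD) (hF.stellar hz) (hb.stellar hF hC hB hz hzφ) rfl

end Stellar

lemma pow_le_zpow_sub_two {m k : ℕ} (hk : 2 ≤ k) (hkm : k ≤ m) :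
    (3 / 2 : ℝ) ^ (m - k) ≤ (3 / 2 : ℝ) ^ ((m : ℤ) - 2) := by
  rw [← zpow_natCast]
  exact zpow_le_zpow_right₀ (by norm_num) (by omega)

lemma one_le_mul_zpow_sub_two (hd : 3 ≤ d) {m : ℕ} (hm : 1 ≤ m) :
    1 ≤ (d : ℝ) / 2 * (3 / 2 : ℝ) ^ ((m : ℤ) - 2) := by
  have h : (2 / 3 : ℝ) ≤ (3 / 2 : ℝ) ^ ((m : ℤ) - 2) :=
    calc (2 / 3 : ℝ) = (3 / 2 : ℝ) ^ (-1 : ℤ) := by norm_num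
      _ ≤ _ := zpow_le_zpow_right₀ (by norm_num) (by omega)
  have hd' : (3 : ℝ) ≤ d := by exact_mod_cast hd
  nlinarith

variable {v : Fin d → Fin d → ℤ} {φ : (Fin d → ℝ) →ₗ[ℝ] ℝ}

lemma isTriangulation_singleton (hv : LinearIndependent ℝ (toReal ∘ v)) :
    IsTriangulation {univ.image v} (coneFam d d v) := by
  have hinj : Function.Injective v := hv.injective.of_comp
  refine ⟨fun s hs => ?_, fun s hs => ?_, by simp [coneFS_image_univ hinj], by simp⟩ <;>
    rw [mem_singleton.mp hs]
  · simp [card_image_of_injective _ hinj]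
  · rwa [coe_image, coe_univ, Set.image_univ, linearIndepOn_range_iff hinj]

lemma one_le_mult_image (hv : LinearIndependent ℝ (toReal ∘ v)) : 1 ≤ mult (univ.image v) :=
  Nat.pos_of_ne_zero <| (linearIndepOn_iff_mult_ne_zero
    (by simp [card_image_of_injective _ hv.injective.of_comp])).mp
      ((isTriangulation_singleton hv).linearIndepOn _ (mem_singleton_self _))

lemma isHeightBounded_singleton (hv : Function.Injective v) (hφ : ∀ i, φ (toReal (v i)) = 1)
    {B : ℝ} (hB : 1 ≤ B) : IsHeightBounded φ B (mult (univ.image v)) {univ.image v} := by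
  refine ⟨fun s hs w hw => ?_, fun s hs => by rw [mem_singleton.mp hs], fun s hs => ?_⟩ <;>
    rw [mem_singleton.mp hs] at *
  · obtain ⟨i, -, rfl⟩ := mem_image.mp hw
    exact (hφ i).trans_le hB
  · simp [sum_image hv.injOn, hφ]

lemma apply_nonneg_of_mem_coneFam (hφ : ∀ i, φ (toReal (v i)) = 1) {x : Fin d → ℝ}
    (hx : x ∈ coneFam d d v) : 0 ≤ φ x := by
  obtain ⟨c, hc, rfl⟩ := mem_coneFam_iff.mp hx
  simpa [hφ] using sum_nonneg fun i (_ : i ∈ univ) => hc i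

lemma mem_smul_convexHull_of_apply_le (hφ : ∀ i, φ (toReal (v i)) = 1) {x : Fin d → ℝ}
    (hx : x ∈ coneFam d d v) {B : ℝ} (hB : 0 < B) (hxB : φ x ≤ B) :
    x ∈ B • convexHull ℝ (insert 0 (Set.range (toReal ∘ v))) := by
  obtain ⟨c, hc, rfl⟩ := mem_coneFam_iff.mp hx
  exact sum_smul_mem_smul_convexHull_insert_zero (toReal ∘ v) hc hB (by simpa [hφ] using hxB)

end UnimodularTriangulation

end

open UnimodularTriangulation Finset in
theorem stmt14_general (d : ℕ) (hd : 3 ≤ d) (v : Fin d → Fin d → ℤ)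
    (hind : LinearIndependent ℝ (fun i => fun j => (v i j : ℝ))) :
    ∃ F : Finset (Finset (Fin d → ℤ)),
      -- each cone of the triangulation is unimodular (its `d` generators are a ℤ-basis of ℤ^d),
      -- so its Hilbert basis is exactly its set of generators
      (∀ s ∈ F, s.card = d ∧ Submodule.span ℤ (s : Set (Fin d → ℤ)) = ⊤) ∧
      -- the cones cover `C`
      (⋃ s ∈ F, coneFS d s) = coneFam d d v ∧
      -- and they pairwise intersect in common faces
      (∀ s ∈ F, ∀ t ∈ F, coneFS d s ∩ coneFS d t = coneFS d (s ∩ t)) ∧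
      -- `Hilb(D_t) ⊆ (d/2)(3/2)^(μ(Δ_C)-2) Δ_C`
      ∀ s ∈ F, ∀ w ∈ s, (fun j => (w j : ℝ)) ∈
        (((d : ℝ) / 2 * ((3 : ℝ) / 2) ^
            ((((Matrix.of fun i j => v i j).det.natAbs : ℤ)) - 2)) •
          convexHull ℝ (insert 0 (Set.range fun i => fun j => (v i j : ℝ)))) := by
  have hv : LinearIndependent ℝ (toReal ∘ v) := hind
  have hinj : Function.Injective v := hv.injective.of_comp
  obtain ⟨φ, hφ⟩ : ∃ φ : (Fin d → ℝ) →ₗ[ℝ] ℝ, ∀ i, φ (toReal (v i)) = 1 :=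
    exists_linearMap_apply_eq_one hv
  have hB := one_le_mul_zpow_sub_two hd (one_le_mult_image hv)
  obtain ⟨F, hF, hb, hspan⟩ :=
    exists_refinement_span_eq_top (fun _ => apply_nonneg_of_mem_coneFam hφ)
      (fun k hk hkm => mul_le_mul_of_nonneg_left (pow_le_zpow_sub_two hk hkm) (by positivity))
      (isTriangulation_singleton hv) (isHeightBounded_singleton hinj hφ hB)
  refine ⟨F, fun s hs => ⟨hF.card_eq s hs, hspan s hs⟩, hF.iUnion_eq, hF.inter_eq,
    fun s hs w hw => ?_⟩
  rw [← mult_image hinj]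
  exact mem_smul_convexHull_of_apply_le hφ (hF.toReal_mem hs hw) (one_pos.trans_le hB)
    (hb.apply_le s hs w hw)

theorem stmt14 (d : ℕ) (hd : 3 ≤ d) (v : Fin d → Fin d → ℤ)
    (hprim : ∀ i, Primitive d (v i))
    (hind : LinearIndependent ℝ (fun i => fun j => (v i j : ℝ))) :
    ∃ F : Finset (Finset (Fin d → ℤ)),
      -- each cone of the triangulation is unimodular (its `d` generators are a ℤ-basis of ℤ^d),
      -- so its Hilbert basis is exactly its set of generators
      (∀ s ∈ F, s.card = d ∧ Submodule.span ℤ (s : Set (Fin d → ℤ)) = ⊤) ∧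
      -- the cones cover `C`
      (⋃ s ∈ F, coneFS d s) = coneFam d d v ∧
      -- and they pairwise intersect in common faces
      (∀ s ∈ F, ∀ t ∈ F, coneFS d s ∩ coneFS d t = coneFS d (s ∩ t)) ∧
      -- `Hilb(D_t) ⊆ (d/2)(3/2)^(μ(Δ_C)-2) Δ_C`
      ∀ s ∈ F, ∀ w ∈ s, (fun j => (w j : ℝ)) ∈
        (((d : ℝ) / 2 * ((3 : ℝ) / 2) ^
            ((((Matrix.of fun i j => v i j).det.natAbs : ℤ)) - 2)) •
          convexHull ℝ (insert 0 (Set.range fun i => fun j => (v i j : ℝ)))) :=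
  stmt14_general d hd v hind
end

section
/- Let $v_1, \dots, v_d \subset \mathbb{R}^d$ be linearly independent, $\Delta = \operatorname{conv}(O, v_1, \dots, v_d)$, and let $\mathcal{H}$ be the hyperplane through $O$ and the points $v_1 + (d-1)v_i$ for $i = 2, \dots, d$. Let $\delta$ be the part of $\operatorname{conv}(v_1, \dots, v_d)$ cut off by $\mathcal{H}$ containing $v_1$, and let $\Phi$ be the closure of $\mathbb{R}_+\delta \setminus \big(((1+\mathbb{R}_+)v_1 + \mathbb{R}_+ v_2 + \cdots + \mathbb{R}_+ v_d) \cup \Delta\big)$. Then the homothetic image $\Phi' = -\frac{1}{d-1} v_1 + \frac{d}{d-1}\Phi$ satisfies $\Phi' \subset (d+1)\Delta$. -/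
open Pointwise

lemma memHull17 (d : ℕ) (B : Module.Basis (Fin d) ℝ (Fin d → ℝ)) (x : Fin d → ℝ)
    (h0 : ∀ i, 0 ≤ B.repr x i) (h1 : ∑ i, B.repr x i ≤ 1) :
    x ∈ convexHull ℝ (insert (0 : Fin d → ℝ) (Set.range B)) := by
  classical
  set w : Option (Fin d) → ℝ := fun o => o.elim (1 - ∑ i, B.repr x i) (fun i => B.repr x i)
    with hw'
  set z : Option (Fin d) → (Fin d → ℝ) := fun o => o.elim 0 B with hz'
  have hw : ∀ o ∈ (Finset.univ : Finset (Option (Fin d))), 0 ≤ w o := by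
    rintro (_ | i) _
    · simpa [hw'] using h1
    · exact h0 i
  have hsum : ∑ o : Option (Fin d), w o = 1 := by
    rw [Fintype.sum_option]; simp [hw']
  have hz : ∀ o ∈ (Finset.univ : Finset (Option (Fin d))),
      z o ∈ insert (0 : Fin d → ℝ) (Set.range B) := by
    rintro (_ | i) _
    · exact Set.mem_insert _ _
    · exact Set.mem_insert_iff.2 (Or.inr ⟨i, rfl⟩)
  have hmem := Finset.centerMass_mem_convexHull Finset.univ hw (by rw [hsum]; norm_num) hz
  have hcm : Finset.univ.centerMass w z = x := by
    rw [Finset.centerMass, hsum, Fintype.sum_option]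
    simp only [hz', hw', Option.elim, smul_zero, zero_add, inv_one, one_smul]
    exact B.sum_repr x
  rwa [hcm] at hmem

lemma coordHull17 (d : ℕ) (B : Module.Basis (Fin d) ℝ (Fin d → ℝ)) {x : Fin d → ℝ}
    (hx : x ∈ convexHull ℝ (Set.range B)) :
    (∀ i, 0 ≤ B.repr x i) ∧ ∑ i, B.repr x i = 1 := by
  classical
  have hsub : convexHull ℝ (Set.range B) ⊆
      {x | (∀ i, 0 ≤ B.repr x i) ∧ ∑ i, B.repr x i = 1} := by
    apply convexHull_min
    · rintro _ ⟨j, rfl⟩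
      constructor
      · intro i
        simp only [Module.Basis.repr_self, Finsupp.single_apply]
        split <;> norm_num
      · simp [Module.Basis.repr_self, Finsupp.single_apply]
    · rintro x ⟨hx0, hx1⟩ y ⟨hy0, hy1⟩ a b ha hb hab
      constructor
      · intro i
        simp only [map_add, map_smul, Finsupp.coe_add, Finsupp.coe_smul, Pi.add_apply,
          Pi.smul_apply, smul_eq_mul]
        nlinarith [hx0 i, hy0 i]
      · simp only [map_add, map_smul, Finsupp.coe_add, Finsupp.coe_smul, Pi.add_apply,
          Pi.smul_apply, smul_eq_mul, Finset.sum_add_distrib, ← Finset.mul_sum, hx1, hy1]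
        linarith
  exact hsub hx

theorem stmt17 (d : ℕ) (hd : 2 ≤ d) (B : Module.Basis (Fin d) ℝ (Fin d → ℝ))
    (i₁ : Fin d) (hi₁ : (i₁ : ℕ) = 0)  -- the index of the vertex `v₁`
    (Δ : Set (Fin d → ℝ)) (hΔ : Δ = convexHull ℝ (insert 0 (Set.range B)))
    -- `δ` is the part of `conv(v₁,…,v_d)` cut off by the hyperplane `H` through `O` and the
    -- points `v₁ + (d-1)vᵢ`, `i ≥ 2`, containing `v₁`; `H` is given by
    -- `(d-1)·α₁ = α₂ + ⋯ + α_d` in the coordinates `α` with respect to `v₁,…,v_d`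
    (δ : Set (Fin d → ℝ))
    (hδ : δ = convexHull ℝ (Set.range B) ∩
      {x | (∑ i ∈ Finset.univ.erase i₁, B.repr x i) ≤ ((d : ℝ) - 1) * B.repr x i₁})
    (Φ : Set (Fin d → ℝ))
    (hΦ : Φ = closure ({y | ∃ t : ℝ, 0 ≤ t ∧ ∃ x ∈ δ, y = t • x} \
      ({y | ∃ α : Fin d → ℝ, 1 ≤ α i₁ ∧ (∀ i, i ≠ i₁ → 0 ≤ α i) ∧ y = ∑ i, α i • B i} ∪ Δ))) :
    (fun x => B i₁ + ((d : ℝ) / ((d : ℝ) - 1)) • (x - B i₁)) '' Φ ⊆ ((d : ℝ) + 1) • Δ := by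
  classical
  have hc2 : (2 : ℝ) ≤ (d : ℝ) := by exact_mod_cast hd
  have hc1 : (0 : ℝ) < (d : ℝ) - 1 := by linarith
  have hcont : ∀ i, Continuous fun x : Fin d → ℝ => (B.repr x i : ℝ) := by
    intro i
    have := (B.coord i).continuous_of_finiteDimensional
    exact this
  set S : Set (Fin d → ℝ) := {x | (∀ i, 0 ≤ B.repr x i) ∧
      (∑ i ∈ Finset.univ.erase i₁, B.repr x i) ≤ ((d : ℝ) - 1) * B.repr x i₁ ∧
      B.repr x i₁ ≤ 1 ∧ 1 ≤ ∑ i, B.repr x i} with hS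
  have hScl : IsClosed S := by
    have c1 : IsClosed {x : Fin d → ℝ | ∀ i, 0 ≤ B.repr x i} := by
      have : {x : Fin d → ℝ | ∀ i, 0 ≤ B.repr x i} = ⋂ i, {x | 0 ≤ B.repr x i} := by
        ext; simp
      rw [this]
      exact isClosed_iInter fun i => isClosed_le continuous_const (hcont i)
    have c2 : IsClosed {x : Fin d → ℝ |
        (∑ i ∈ Finset.univ.erase i₁, B.repr x i) ≤ ((d : ℝ) - 1) * B.repr x i₁} :=
      isClosed_le (continuous_finset_sum _ fun i _ => hcont i)
        (continuous_const.mul (hcont i₁))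
    have c3 : IsClosed {x : Fin d → ℝ | B.repr x i₁ ≤ 1} :=
      isClosed_le (hcont i₁) continuous_const
    have c4 : IsClosed {x : Fin d → ℝ | 1 ≤ ∑ i, B.repr x i} :=
      isClosed_le continuous_const (continuous_finset_sum _ fun i _ => hcont i)
    exact (c1.inter (c2.inter (c3.inter c4)))
  have hpre : ({y | ∃ t : ℝ, 0 ≤ t ∧ ∃ x ∈ δ, y = t • x} \
      ({y | ∃ α : Fin d → ℝ, 1 ≤ α i₁ ∧ (∀ i, i ≠ i₁ → 0 ≤ α i) ∧ y = ∑ i, α i • B i} ∪ Δ))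
      ⊆ S := by
    rintro y ⟨⟨t, ht, x, hxδ, rfl⟩, hnot⟩
    rw [hδ] at hxδ
    obtain ⟨hxhull, hxcut⟩ := hxδ
    obtain ⟨hw0, hw1⟩ := coordHull17 d B hxhull
    have hrep : ∀ i, B.repr (t • x) i = t * B.repr x i := by
      intro i; simp
    have hnn : ∀ i, 0 ≤ B.repr (t • x) i := by
      intro i; rw [hrep]; exact mul_nonneg ht (hw0 i)
    have hsum : ∑ i, B.repr (t • x) i = t := by
      simp only [hrep, ← Finset.mul_sum, hw1, mul_one]
    have ht1 : 1 ≤ t := by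
      by_contra h
      push_neg at h
      exact hnot (Or.inr (hΔ ▸ memHull17 d B (t • x) hnn (by rw [hsum]; linarith)))
    have hcut' : (∑ i ∈ Finset.univ.erase i₁, B.repr (t • x) i)
        ≤ ((d : ℝ) - 1) * B.repr (t • x) i₁ := by
      simp only [hrep, ← Finset.mul_sum]
      calc t * ∑ i ∈ Finset.univ.erase i₁, B.repr x i
          ≤ t * (((d : ℝ) - 1) * B.repr x i₁) :=
            mul_le_mul_of_nonneg_left hxcut ht
        _ = ((d : ℝ) - 1) * (t * B.repr x i₁) := by ring
    have hle1 : B.repr (t • x) i₁ ≤ 1 := by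
      by_contra h
      push_neg at h
      apply hnot
      left
      exact ⟨fun i => B.repr (t • x) i, le_of_lt h, fun i _ => hnn i, (B.sum_repr (t • x)).symm⟩
    exact ⟨hnn, hcut', hle1, by rw [hsum]; exact ht1⟩
  have hΦS : Φ ⊆ S := by
    rw [hΦ]
    exact closure_minimal hpre hScl
  rintro _ ⟨x, hx, rfl⟩
  obtain ⟨h0, hE, h1, hs⟩ := hΦS hx
  set r : ℝ := (d : ℝ) / ((d : ℝ) - 1) with hr
  set z : Fin d → ℝ := B i₁ + r • (x - B i₁) with hzdef
  set α : ℝ := B.repr x i₁ with hα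
  set E : ℝ := ∑ i ∈ Finset.univ.erase i₁, B.repr x i with hEdef
  have hE0 : 0 ≤ E := Finset.sum_nonneg fun i _ => h0 i
  have hsplit : ∑ i, B.repr x i = α + E := by
    rw [hEdef, hα, Finset.add_sum_erase _ _ (Finset.mem_univ i₁)]
  have hdα : 1 ≤ (d : ℝ) * α := by nlinarith [hs, hE, hsplit]
  have hrepz : ∀ i, B.repr z i =
      (if i = i₁ then 1 + r * (B.repr x i₁ - 1) else r * B.repr x i) := by
    intro i
    simp only [hzdef, map_add, map_sub, map_smul, Module.Basis.repr_self, Finsupp.coe_add,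
      Finsupp.coe_smul, Finsupp.coe_sub, Pi.add_apply, Pi.smul_apply, Pi.sub_apply,
      smul_eq_mul, Finsupp.single_apply]
    split
    · next hh => simp [hh]
    · next hh =>
      rw [if_neg (fun hc => hh hc.symm)]
      ring
  have hzn : ∀ i, 0 ≤ B.repr z i := by
    intro i
    rw [hrepz i]
    split
    · have key : 1 + r * (B.repr x i₁ - 1) = ((d : ℝ) * α - 1) / ((d : ℝ) - 1) := by
        rw [hr, hα]; field_simp; ring
      rw [key]
      exact div_nonneg (by linarith) (le_of_lt hc1)
    · exact mul_nonneg (div_nonneg (by positivity) (le_of_lt hc1)) (h0 i)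
  have hzsum : ∑ i, B.repr z i ≤ (d : ℝ) + 1 := by
    rw [← Finset.add_sum_erase _ _ (Finset.mem_univ i₁), hrepz i₁, if_pos rfl]
    have hrest : ∑ i ∈ Finset.univ.erase i₁, B.repr z i = r * E := by
      rw [hEdef, Finset.mul_sum]
      apply Finset.sum_congr rfl
      intro i hi
      rw [hrepz i, if_neg (Finset.ne_of_mem_erase hi)]
    rw [hrest]
    have h2 : r * (α - 1) + r * E ≤ (d : ℝ) := by
      rw [hr, div_mul_eq_mul_div, div_mul_eq_mul_div, ← add_div, div_le_iff₀ hc1]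
      have A : (d : ℝ) * E ≤ (d : ℝ) * (((d : ℝ) - 1) * α) :=
        mul_le_mul_of_nonneg_left hE (by positivity)
      have A2 : (d : ℝ) * (((d : ℝ) - 1) * α) ≤ (d : ℝ) * ((d : ℝ) - 1) := by
        nlinarith [mul_le_mul_of_nonneg_left h1
          (mul_nonneg (by positivity : (0:ℝ) ≤ (d : ℝ)) hc1.le)]
      have A3 : (d : ℝ) * (α - 1) ≤ 0 := by
        nlinarith [mul_le_mul_of_nonneg_left h1 (by positivity : (0:ℝ) ≤ (d : ℝ))]
      linarith
    linarith [h2]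
  rw [hΔ, Set.mem_smul_set]
  refine ⟨(1 / ((d : ℝ) + 1)) • z, ?_, ?_⟩
  · apply memHull17
    · intro i
      simp only [map_smul, Finsupp.coe_smul, Pi.smul_apply, smul_eq_mul]
      exact mul_nonneg (by positivity) (hzn i)
    · simp only [map_smul, Finsupp.coe_smul, Pi.smul_apply, smul_eq_mul, ← Finset.mul_sum]
      rw [div_mul_eq_mul_div, one_mul, div_le_one (by positivity)]
      exact hzsum
  · rw [smul_smul]
    have : ((d : ℝ) + 1) * (1 / ((d : ℝ) + 1)) = 1 := by
      field_simp
    rw [this, one_smul]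
end
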